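/- arXiv:2212.08603 — 6 statements merged into one kernel-verified Lean document; each statement's English description precedes it below -/
import Mathlib

section
/- Let L be a pseudo-Finsler Lagrangian on 𝒜 with geodesic spray coefficients Gᵃ. Suppose there exist smooth functions Γᶜ_{ab}, defined on an open subset of ℝⁿ containing the projection of 𝒜 to the x-variable and depending on x only, with Γᶜ_{ab} = Γᶜ_{ba}, such that for every index a and every (x,ẋ) ∈ 𝒜 one has ∂L/∂xᵃ(x,ẋ) − Γᶜ_{ab}(x)·ẋᵇ·∂L/∂ẋᶜ(x,ẋ) = 0. Then 2Gᶜ(x,ẋ) = Γᶜ_{ab}(x)·ẋᵃ·ẋᵇ for all (x,ẋ) ∈ 𝒜; in particular each Gᶜ is quadratic in the velocity ẋ, i.e. L is of Berwald type with canonical affine connection Γ. -/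
noncomputable section
open scoped BigOperators

/-- Points `(x, ẋ)` of the (slit) tangent bundle of `ℝⁿ`. -/
abbrev TPt (n : ℕ) := (Fin n → ℝ) × (Fin n → ℝ)

/-- The partial derivative `∂L/∂xᵃ`. -/
def dX {n : ℕ} (L : TPt n → ℝ) (a : Fin n) (p : TPt n) : ℝ :=
  fderiv ℝ L p (Pi.single a 1, 0)

/-- The partial derivative `∂L/∂ẋᵃ`. -/
def dV {n : ℕ} (L : TPt n → ℝ) (a : Fin n) (p : TPt n) : ℝ :=
  fderiv ℝ L p (0, Pi.single a 1)

/-- The Finsler metric tensor `g_{ab} = ½ ∂²L/∂ẋᵃ∂ẋᵇ`. -/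
def gMat {n : ℕ} (L : TPt n → ℝ) (p : TPt n) : Matrix (Fin n) (Fin n) ℝ :=
  Matrix.of fun a b => (1 / 2) * dV (dV L b) a p

/-- The geodesic spray coefficients `Gᵃ = ¼ g^{ab}(ẋᶜ ∂²L/∂xᶜ∂ẋᵇ − ∂L/∂xᵇ)`. -/
def spray {n : ℕ} (L : TPt n → ℝ) (c : Fin n) (p : TPt n) : ℝ :=
  (1 / 4) * ∑ b, ((gMat L p)⁻¹ : Matrix (Fin n) (Fin n) ℝ) c b *
    ((∑ d, p.2 d * dX (dV L b) d p) - dX L b p)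

/-- Symmetry of second partial derivatives for a function smooth near `p`. -/
lemma aux_symm {n : ℕ} {𝒜 : Set (TPt n)} (h𝒜open : IsOpen 𝒜) {L : TPt n → ℝ}
    (hL : ContDiffOn ℝ (⊤ : ℕ∞) L 𝒜) {p : TPt n} (hp : p ∈ 𝒜) (b d : Fin n) :
    dX (dV L b) d p = dV (dX L d) b p := by
  have hmem : 𝒜 ∈ nhds p := h𝒜open.mem_nhds hp
  have hfd : ContDiffAt ℝ (⊤ : ℕ∞) (fderiv ℝ L) p :=
    (hL.contDiffAt hmem).fderiv_right (by simp)
  have hd2 : DifferentiableAt ℝ (fderiv ℝ L) p := hfd.differentiableAt (by simp)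
  have hev : ∀ᶠ y in nhds p, HasFDerivAt L (fderiv ℝ L y) y := by
    filter_upwards [h𝒜open.eventually_mem hp] with y hy
    exact ((hL.contDiffAt (h𝒜open.mem_nhds hy)).differentiableAt (by simp)).hasFDerivAt
  have H := second_derivative_symmetric_of_eventually hev hd2.hasFDerivAt
  have key : ∀ v w : TPt n, fderiv ℝ (fun q => fderiv ℝ L q v) p w
      = fderiv ℝ (fderiv ℝ L) p w v := by
    intro v w
    rw [fderiv_clm_apply hd2 (differentiableAt_const v)]
    simp
  have e1 : dX (dV L b) d p
      = fderiv ℝ (fun q => fderiv ℝ L q ((0:Fin n → ℝ), Pi.single b 1)) p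
        (Pi.single d 1, (0:Fin n → ℝ)) := rfl
  have e2 : dV (dX L d) b p
      = fderiv ℝ (fun q => fderiv ℝ L q (Pi.single d 1, (0:Fin n → ℝ))) p
        ((0:Fin n → ℝ), Pi.single b 1) := rfl
  rw [e1, e2, key, key]
  exact H _ _

/-- Velocity derivative of the horizontality identity. -/
lemma aux_dVdX {n : ℕ} {𝒜 : Set (TPt n)} (h𝒜open : IsOpen 𝒜)
    {L : TPt n → ℝ} (hL : ContDiffOn ℝ (⊤ : ℕ∞) L 𝒜)
    {U : Set (Fin n → ℝ)} (hU : IsOpen U) (hproj : ∀ p ∈ 𝒜, p.1 ∈ U)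
    {Γ : (Fin n → ℝ) → Fin n → Fin n → Fin n → ℝ}
    (hΓsmooth : ∀ c a b, ContDiffOn ℝ (⊤ : ℕ∞) (fun x => Γ x c a b) U)
    (hhor : ∀ p ∈ 𝒜, ∀ a,
      dX L a p - ∑ c, ∑ b, Γ p.1 c a b * p.2 b * dV L c p = 0)
    {p : TPt n} (hp : p ∈ 𝒜) (d b : Fin n) :
    dV (dX L d) b p
      = (∑ c, Γ p.1 c d b * dV L c p)
        + ∑ c, ∑ e, Γ p.1 c d e * p.2 e * dV (dV L c) b p := by
  have hmem : 𝒜 ∈ nhds p := h𝒜open.mem_nhds hp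
  set vb : TPt n := ((0 : Fin n → ℝ), Pi.single b 1) with hvb
  have hΓc : ∀ c a e, ContDiffAt ℝ (⊤ : ℕ∞) (fun q : TPt n => Γ q.1 c a e) p := by
    intro c a e
    exact ((hΓsmooth c a e).contDiffAt (hU.mem_nhds (hproj p hp))).comp p contDiffAt_fst
  have hdiffA : ∀ c e, DifferentiableAt ℝ (fun q : TPt n => Γ q.1 c d e) p :=
    fun c e => (hΓc c d e).differentiableAt (by simp)
  have hdiffB : ∀ e : Fin n, DifferentiableAt ℝ (fun q : TPt n => q.2 e) p := fun e =>
    ((ContinuousLinearMap.proj (R := ℝ) (φ := fun _ : Fin n => ℝ) e).comp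
      (ContinuousLinearMap.snd ℝ (Fin n → ℝ) (Fin n → ℝ))).differentiableAt
  have hdV : ∀ c : Fin n, ∀ q ∈ 𝒜, ContDiffAt ℝ (⊤ : ℕ∞) (dV L c) q := by
    intro c q hq
    exact ((hL.contDiffAt (h𝒜open.mem_nhds hq)).fderiv_right (by simp)).clm_apply
      contDiffAt_const
  have hdiffC : ∀ c, DifferentiableAt ℝ (dV L c) p :=
    fun c => (hdV c p hp).differentiableAt (by simp)
  have hterm : ∀ c e,
      DifferentiableAt ℝ (fun q : TPt n => Γ q.1 c d e * q.2 e * dV L c q) p :=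
    fun c e => ((hdiffA c e).mul (hdiffB e)).mul (hdiffC c)
  have hAval : ∀ c e, fderiv ℝ (fun q : TPt n => Γ q.1 c d e) p vb = 0 := by
    intro c e
    have hg1 : DifferentiableAt ℝ (fun x => Γ x c d e) p.1 :=
      ((hΓsmooth c d e).contDiffAt (hU.mem_nhds (hproj p hp))).differentiableAt (by simp)
    have h : HasFDerivAt (fun q : TPt n => Γ q.1 c d e)
        ((fderiv ℝ (fun x => Γ x c d e) p.1).comp
          (ContinuousLinearMap.fst ℝ (Fin n → ℝ) (Fin n → ℝ))) p :=
      hg1.hasFDerivAt.comp p hasFDerivAt_fst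
    rw [h.fderiv]
    simp [hvb]
  have hBval : ∀ e, fderiv ℝ (fun q : TPt n => q.2 e) p vb
      = (Pi.single b (1:ℝ) : Fin n → ℝ) e := by
    intro e
    set M : TPt n →L[ℝ] ℝ :=
        (ContinuousLinearMap.proj (R := ℝ) (φ := fun _ : Fin n => ℝ) e).comp
          (ContinuousLinearMap.snd ℝ (Fin n → ℝ) (Fin n → ℝ)) with hM
    have h : HasFDerivAt (fun q : TPt n => q.2 e) M p := M.hasFDerivAt
    rw [h.fderiv]
    simp [hM, hvb]
  have hCval : ∀ c, fderiv ℝ (dV L c) p vb = dV (dV L c) b p := fun c => rfl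
  have hEq : (fun q => dX L d q) =ᶠ[nhds p]
      (fun q => ∑ c, ∑ e, Γ q.1 c d e * q.2 e * dV L c q) := by
    filter_upwards [hmem] with q hq
    exact sub_eq_zero.mp (hhor q hq d)
  have hfe : dV (dX L d) b p
      = fderiv ℝ (fun q => ∑ c, ∑ e, Γ q.1 c d e * q.2 e * dV L c q) p vb := by
    have h2 : fderiv ℝ (dX L d) p
        = fderiv ℝ (fun q => ∑ c, ∑ e, Γ q.1 c d e * q.2 e * dV L c q) p :=
      hEq.fderiv_eq (𝕜 := ℝ)
    show fderiv ℝ (dX L d) p vb = _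
    rw [h2]
  rw [hfe]
  rw [fderiv_fun_sum (fun c _ => DifferentiableAt.fun_sum (fun e _ => hterm c e))]
  rw [ContinuousLinearMap.sum_apply]
  have hsingle : ∀ c,
      (fderiv ℝ (fun q : TPt n => ∑ e, Γ q.1 c d e * q.2 e * dV L c q) p) vb
      = Γ p.1 c d b * dV L c p + ∑ e, Γ p.1 c d e * p.2 e * dV (dV L c) b p := by
    intro c
    rw [fderiv_fun_sum (fun e _ => hterm c e), ContinuousLinearMap.sum_apply]
    have hterm2 : ∀ e,
        (fderiv ℝ (fun q : TPt n => Γ q.1 c d e * q.2 e * dV L c q) p) vb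
        = Γ p.1 c d e * ((Pi.single b (1:ℝ) : Fin n → ℝ) e) * dV L c p
          + Γ p.1 c d e * p.2 e * dV (dV L c) b p := by
      intro e
      rw [fderiv_fun_mul ((hdiffA c e).fun_mul (hdiffB e)) (hdiffC c),
        fderiv_fun_mul (hdiffA c e) (hdiffB e)]
      simp only [ContinuousLinearMap.add_apply, ContinuousLinearMap.smul_apply,
        smul_eq_mul, hAval c e, hBval e, hCval c, mul_zero, add_zero]
      ring
    rw [Finset.sum_congr rfl (fun e _ => hterm2 e), Finset.sum_add_distrib]
    congr 1
    simp [Pi.single_apply, Finset.sum_ite_eq', mul_comm]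
  rw [Finset.sum_congr rfl (fun c _ => hsingle c), Finset.sum_add_distrib]


/-- Berwald condition, sufficiency direction.
If a pseudo-Finsler Lagrangian `L` on a conic set `𝒜` is horizontally constant with respect to a
torsion-free affine connection `Γ = Γ(x)`, then its geodesic spray is quadratic in the velocities:
`2Gᶜ = Γᶜ_{ab}(x) ẋᵃ ẋᵇ` on `𝒜`; i.e. `L` is of Berwald type with canonical connection `Γ`. -/
theorem stmt0 (n : ℕ) (hn : 1 ≤ n)
    (𝒜 : Set (TPt n)) (h𝒜open : IsOpen 𝒜) (h𝒜ne : 𝒜.Nonempty)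
    (h𝒜slit : ∀ p ∈ 𝒜, p.2 ≠ 0)
    (h𝒜conic : ∀ p ∈ 𝒜, ∀ l : ℝ, 0 < l → (p.1, l • p.2) ∈ 𝒜)
    (L : TPt n → ℝ) (hL : ContDiffOn ℝ (⊤ : ℕ∞) L 𝒜)
    (hhom : ∀ p ∈ 𝒜, ∀ l : ℝ, 0 < l → L (p.1, l • p.2) = l ^ 2 * L p)
    (hg : ∀ p ∈ 𝒜, IsUnit (gMat L p).det)
    (U : Set (Fin n → ℝ)) (hU : IsOpen U) (hproj : ∀ p ∈ 𝒜, p.1 ∈ U)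
    (Γ : (Fin n → ℝ) → Fin n → Fin n → Fin n → ℝ)
    (hΓsmooth : ∀ c a b, ContDiffOn ℝ (⊤ : ℕ∞) (fun x => Γ x c a b) U)
    (hΓsym : ∀ x c a b, Γ x c a b = Γ x c b a)
    (hhor : ∀ p ∈ 𝒜, ∀ a,
      dX L a p - ∑ c, ∑ b, Γ p.1 c a b * p.2 b * dV L c p = 0) :
    ∀ p ∈ 𝒜, ∀ c, 2 * spray L c p = ∑ a, ∑ b, Γ p.1 c a b * p.2 a * p.2 b := by
  intro p hp c0
  -- the quadratic form
  set T : Fin n → ℝ := fun c => ∑ a, ∑ e, Γ p.1 c a e * p.2 a * p.2 e with hT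
  -- the bracket in the spray equals 2 g_{b a} T a
  have hbra : ∀ bb : Fin n, ((∑ d, p.2 d * dX (dV L bb) d p) - dX L bb p)
      = ∑ a, 2 * gMat L p bb a * T a := by
    intro bb
    have e0 : (∑ d, p.2 d * dX (dV L bb) d p)
        = ∑ d, p.2 d * ((∑ c, Γ p.1 c d bb * dV L c p)
            + ∑ c, ∑ e, Γ p.1 c d e * p.2 e * dV (dV L c) bb p) :=
      Finset.sum_congr rfl fun d _ => by
        rw [aux_symm h𝒜open hL hp bb d,
          aux_dVdX h𝒜open hL hU hproj hΓsmooth hhor hp d bb]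
    have e1 : dX L bb p = ∑ c, ∑ e, Γ p.1 c bb e * p.2 e * dV L c p :=
      sub_eq_zero.mp (hhor p hp bb)
    rw [e0, e1]
    simp only [mul_add, Finset.sum_add_distrib]
    have cancel : (∑ d, p.2 d * ∑ c, Γ p.1 c d bb * dV L c p)
        = ∑ c, ∑ e, Γ p.1 c bb e * p.2 e * dV L c p := by
      simp only [Finset.mul_sum]
      rw [Finset.sum_comm]
      exact Finset.sum_congr rfl fun c _ => Finset.sum_congr rfl fun d _ => by
        rw [hΓsym p.1 c d bb]; ring
    rw [cancel, add_sub_cancel_left]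
    have : (∑ d, p.2 d * ∑ c, ∑ e, Γ p.1 c d e * p.2 e * dV (dV L c) bb p)
        = ∑ c, ∑ d, ∑ e, p.2 d * (Γ p.1 c d e * p.2 e * dV (dV L c) bb p) := by
      simp only [Finset.mul_sum]
      exact Finset.sum_comm
    rw [this]
    refine Finset.sum_congr rfl fun c _ => ?_
    have hgg : (2:ℝ) * gMat L p bb c = dV (dV L c) bb p := by
      simp [gMat]
    rw [hgg, hT]
    simp only [Finset.sum_mul, Finset.mul_sum]
    exact Finset.sum_congr rfl fun d _ => Finset.sum_congr rfl fun e _ => by ring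
  -- now the linear algebra
  have hinv : (gMat L p)⁻¹ * gMat L p = 1 := Matrix.nonsing_inv_mul _ (hg p hp)
  have : 2 * spray L c0 p = T c0 := by
    rw [spray]
    rw [Finset.sum_congr rfl fun bb _ => by rw [hbra bb]]
    have step1 : (2:ℝ) * ((1 / 4) * ∑ b, ((gMat L p)⁻¹ : Matrix (Fin n) (Fin n) ℝ) c0 b
          * (∑ a, 2 * gMat L p b a * T a))
        = ∑ b, ∑ a, ((gMat L p)⁻¹ : Matrix (Fin n) (Fin n) ℝ) c0 b * gMat L p b a * T a := by
      rw [Finset.mul_sum, Finset.mul_sum]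
      refine Finset.sum_congr rfl fun b _ => ?_
      rw [Finset.mul_sum, Finset.mul_sum, Finset.mul_sum]
      exact Finset.sum_congr rfl fun a _ => by ring
    rw [step1, Finset.sum_comm]
    have step2 : ∀ a : Fin n,
        (∑ b, ((gMat L p)⁻¹ : Matrix (Fin n) (Fin n) ℝ) c0 b * gMat L p b a * T a)
        = ((gMat L p)⁻¹ * gMat L p) c0 a * T a := by
      intro a
      rw [Matrix.mul_apply, Finset.sum_mul]
    rw [Finset.sum_congr rfl fun a _ => step2 a, hinv]
    simp [Matrix.one_apply]
  rw [this, hT]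
end
end

section
/- Let L be a pseudo-Finsler Lagrangian on 𝒜 with geodesic spray coefficients Gᵃ, and set Nᵃ_b := ∂Gᵃ/∂ẋᵇ (the Cartan nonlinear connection coefficients). Then for every index a and every (x,ẋ) ∈ 𝒜, ∂L/∂xᵃ(x,ẋ) = Nᵇ_a(x,ẋ)·∂L/∂ẋᵇ(x,ẋ); i.e., the Finsler Lagrangian is horizontally constant, δ_a L = 0, for its canonical nonlinear connection. -/
noncomputable section
open scoped BigOperators

/-! ### Auxiliary lemmas -/

/-- The auxiliary quantity `ẋᵈ ∂²L/∂xᵈ∂ẋᶜ − ∂L/∂xᶜ`. -/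
def Qc {n : ℕ} (L : TPt n → ℝ) (c : Fin n) (q : TPt n) : ℝ :=
  (∑ d, q.2 d * dX (dV L c) d q) - dX L c q

lemma vec_eq_sum {n : ℕ} (v : Fin n → ℝ) :
    v = ∑ b, (v b) • (Pi.single b 1 : Fin n → ℝ) := by
  conv_lhs => rw [← Finset.univ_sum_single v]
  refine Finset.sum_congr rfl fun b _ => ?_
  rw [← Pi.single_smul, smul_eq_mul, mul_one]

lemma fderiv_apply_v {n : ℕ} (f : TPt n → ℝ) (p : TPt n) (v : Fin n → ℝ) :
    fderiv ℝ f p (0, v) = ∑ b, v b * dV f b p := by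
  have h : ((0, v) : TPt n) = ∑ b, v b • (((0 : Fin n → ℝ), Pi.single b 1) : TPt n) := by
    rw [Prod.ext_iff]
    constructor
    · rw [Prod.fst_sum]; simp
    · rw [Prod.snd_sum]
      simpa using vec_eq_sum v
  rw [h, map_sum]
  simp only [map_smul, smul_eq_mul, dV]

lemma euler_fderiv {n : ℕ} {f : TPt n → ℝ} {p : TPt n}
    (hf : DifferentiableAt ℝ f p) (k : ℕ)
    (hh : ∀ l : ℝ, 0 < l → f (p.1, l • p.2) = l ^ k * f p) :
    fderiv ℝ f p (0, p.2) = k * f p := by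
  have hγ : HasDerivAt (fun t : ℝ => ((p.1, t • p.2) : TPt n)) (((0 : Fin n → ℝ), p.2)) 1 := by
    have h1 : HasDerivAt (fun t : ℝ => t • p.2) ((1:ℝ) • p.2) 1 :=
      (hasDerivAt_id (1:ℝ)).smul_const p.2
    rw [one_smul] at h1
    exact (hasDerivAt_const (1:ℝ) p.1).prodMk h1
  have hp1 : ((p.1, (1:ℝ) • p.2) : TPt n) = p := by rw [one_smul]
  have hF : HasFDerivAt f (fderiv ℝ f p) ((fun t : ℝ => ((p.1, t • p.2) : TPt n)) 1) := by
    simpa [hp1] using hf.hasFDerivAt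
  have hcomp : HasDerivAt (fun t : ℝ => f (p.1, t • p.2)) (fderiv ℝ f p (0, p.2)) 1 :=
    hF.comp_hasDerivAt 1 hγ
  have heq : (fun t : ℝ => f (p.1, t • p.2)) =ᶠ[nhds (1:ℝ)] fun t => t ^ k * f p := by
    filter_upwards [eventually_gt_nhds zero_lt_one] with t ht using hh t ht
  have h2 : HasDerivAt (fun t : ℝ => t ^ k * f p) ((k : ℝ) * f p) 1 := by
    simpa using (hasDerivAt_pow k (1:ℝ)).mul_const (f p)
  exact (hcomp.congr_of_eventuallyEq heq.symm).unique h2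

lemma contDiffOn_fderiv_apply {n : ℕ} {f : TPt n → ℝ} {s : Set (TPt n)}
    (hs : IsOpen s) (hf : ContDiffOn ℝ (⊤ : ℕ∞) f s) (w : TPt n) :
    ContDiffOn ℝ (⊤ : ℕ∞) (fun q => fderiv ℝ f q w) s := by
  have h1 : ContDiffOn ℝ (⊤ : ℕ∞) (fderiv ℝ f) s := hf.fderiv_of_isOpen hs (by simp)
  exact (ContinuousLinearMap.apply ℝ ℝ w).contDiff.comp_contDiffOn h1

lemma contDiffOn_dV {n : ℕ} {f : TPt n → ℝ} {s : Set (TPt n)}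
    (hs : IsOpen s) (hf : ContDiffOn ℝ (⊤ : ℕ∞) f s) (b : Fin n) :
    ContDiffOn ℝ (⊤ : ℕ∞) (dV f b) s := contDiffOn_fderiv_apply hs hf _

lemma contDiffOn_dX {n : ℕ} {f : TPt n → ℝ} {s : Set (TPt n)}
    (hs : IsOpen s) (hf : ContDiffOn ℝ (⊤ : ℕ∞) f s) (b : Fin n) :
    ContDiffOn ℝ (⊤ : ℕ∞) (dX f b) s := contDiffOn_fderiv_apply hs hf _

lemma diffAt_of_contDiffOn {n : ℕ} {f : TPt n → ℝ} {s : Set (TPt n)}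
    (hs : IsOpen s) (hf : ContDiffOn ℝ (⊤ : ℕ∞) f s) {p : TPt n} (hp : p ∈ s) :
    DifferentiableAt ℝ f p :=
  (hf.contDiffAt (hs.mem_nhds hp)).differentiableAt (by simp)

lemma fderiv_fderiv_apply {n : ℕ} {f : TPt n → ℝ} {s : Set (TPt n)}
    (hs : IsOpen s) (hf : ContDiffOn ℝ (⊤ : ℕ∞) f s) {p : TPt n} (hp : p ∈ s) (v w : TPt n) :
    fderiv ℝ (fun q => fderiv ℝ f q w) p v = fderiv ℝ (fderiv ℝ f) p v w := by
  have h1 : DifferentiableAt ℝ (fderiv ℝ f) p :=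
    ((hf.fderiv_of_isOpen hs (m := (⊤ : ℕ∞)) (by simp)).contDiffAt (hs.mem_nhds hp)).differentiableAt (by simp)
  have h2 := (((ContinuousLinearMap.apply ℝ ℝ w).hasFDerivAt).comp p h1.hasFDerivAt).fderiv
  calc fderiv ℝ (fun q => fderiv ℝ f q w) p v
      = ((ContinuousLinearMap.apply ℝ ℝ w).comp (fderiv ℝ (fderiv ℝ f) p)) v := by
        rw [← h2]; rfl
    _ = fderiv ℝ (fderiv ℝ f) p v w := rfl

lemma clairaut {n : ℕ} {f : TPt n → ℝ} {s : Set (TPt n)}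
    (hs : IsOpen s) (hf : ContDiffOn ℝ (⊤ : ℕ∞) f s) {p : TPt n} (hp : p ∈ s) (v w : TPt n) :
    fderiv ℝ (fderiv ℝ f) p v w = fderiv ℝ (fderiv ℝ f) p w v := by
  have hev : ∀ᶠ y in nhds p, HasFDerivAt f (fderiv ℝ f y) y := by
    filter_upwards [hs.mem_nhds hp] with y hy
    exact (diffAt_of_contDiffOn hs hf hy).hasFDerivAt
  have h1 : DifferentiableAt ℝ (fderiv ℝ f) p :=
    ((hf.fderiv_of_isOpen hs (m := (⊤ : ℕ∞)) (by simp)).contDiffAt (hs.mem_nhds hp)).differentiableAt (by simp)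
  exact second_derivative_symmetric_of_eventually hev h1.hasFDerivAt v w

lemma dX_dV_symm {n : ℕ} {f : TPt n → ℝ} {s : Set (TPt n)}
    (hs : IsOpen s) (hf : ContDiffOn ℝ (⊤ : ℕ∞) f s) {p : TPt n} (hp : p ∈ s) (b d : Fin n) :
    dX (dV f b) d p = dV (dX f d) b p := by
  show fderiv ℝ (fun q => fderiv ℝ f q (0, Pi.single b 1)) p (Pi.single d 1, 0)
      = fderiv ℝ (fun q => fderiv ℝ f q (Pi.single d 1, 0)) p (0, Pi.single b 1)
  rw [fderiv_fderiv_apply hs hf hp, fderiv_fderiv_apply hs hf hp, clairaut hs hf hp]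

lemma differentiableAt_finset_prod {n : ℕ} {ι : Type*} [DecidableEq ι] {p : TPt n}
    (s : Finset ι) (f : ι → TPt n → ℝ) (h : ∀ i ∈ s, DifferentiableAt ℝ (f i) p) :
    DifferentiableAt ℝ (fun q => ∏ i ∈ s, f i q) p := by
  induction s using Finset.induction_on with
  | empty => simpa using differentiableAt_const (1:ℝ)
  | @insert a s ha ih =>
    simp only [Finset.prod_insert ha]
    exact (h a (Finset.mem_insert_self a s)).mul
      (ih fun i hi => h i (Finset.mem_insert_of_mem hi))

lemma differentiableAt_det {n : ℕ} {M : TPt n → Matrix (Fin n) (Fin n) ℝ} {p : TPt n}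
    (h : ∀ i j, DifferentiableAt ℝ (fun q => M q i j) p) :
    DifferentiableAt ℝ (fun q => (M q).det) p := by
  simp only [Matrix.det_apply']
  exact DifferentiableAt.fun_sum fun σ _ =>
    ((differentiableAt_finset_prod _ _ fun i _ => h (σ i) i).const_mul _)

lemma differentiableAt_adjugate {n : ℕ} {M : TPt n → Matrix (Fin n) (Fin n) ℝ} {p : TPt n}
    (h : ∀ i j, DifferentiableAt ℝ (fun q => M q i j) p) (b c : Fin n) :
    DifferentiableAt ℝ (fun q => (M q).adjugate b c) p := by
  simp only [Matrix.adjugate_apply]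
  apply differentiableAt_det
  intro i j
  by_cases hic : i = c
  · simp [Matrix.updateRow_apply, hic]
  · simpa [Matrix.updateRow_apply, hic] using h i j

lemma inv_entry_eq {n : ℕ} (M : Matrix (Fin n) (Fin n) ℝ) (b c : Fin n) :
    (M⁻¹ : Matrix (Fin n) (Fin n) ℝ) b c = (M.det)⁻¹ * M.adjugate b c := by
  rw [Matrix.inv_def, Ring.inverse_eq_inv', Matrix.smul_apply, smul_eq_mul]

/-- For any pseudo-Finsler Lagrangian `L`, with nonlinear connection coefficients
`Nᵃ_b = ∂Gᵃ/∂ẋᵇ` obtained from the geodesic spray, one has `∂L/∂xᵃ = Nᵇ_a ∂L/∂ẋᵇ` on `𝒜`;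
i.e. `L` is horizontally constant for its canonical nonlinear connection: `δ_a L = 0`. -/
theorem stmt1 (n : ℕ) (hn : 1 ≤ n)
    (𝒜 : Set (TPt n)) (h𝒜open : IsOpen 𝒜) (h𝒜ne : 𝒜.Nonempty)
    (h𝒜slit : ∀ p ∈ 𝒜, p.2 ≠ 0)
    (h𝒜conic : ∀ p ∈ 𝒜, ∀ l : ℝ, 0 < l → (p.1, l • p.2) ∈ 𝒜)
    (L : TPt n → ℝ) (hL : ContDiffOn ℝ (⊤ : ℕ∞) L 𝒜)
    (hhom : ∀ p ∈ 𝒜, ∀ l : ℝ, 0 < l → L (p.1, l • p.2) = l ^ 2 * L p)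
    (hg : ∀ p ∈ 𝒜, IsUnit (gMat L p).det) :
    ∀ p ∈ 𝒜, ∀ a, dX L a p = ∑ b, dV (spray L b) a p * dV L b p := by
  classical
  -- smoothness of iterated partials
  have hL1 : ∀ b, ContDiffOn ℝ (⊤ : ℕ∞) (dV L b) 𝒜 := fun b => contDiffOn_dV h𝒜open hL b
  have hLX : ∀ c, ContDiffOn ℝ (⊤ : ℕ∞) (dX L c) 𝒜 := fun c => contDiffOn_dX h𝒜open hL c
  have hL2 : ∀ a b, ContDiffOn ℝ (⊤ : ℕ∞) (dV (dV L b) a) 𝒜 := fun a b => contDiffOn_dV h𝒜open (hL1 b) a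
  have hL2X : ∀ c d, ContDiffOn ℝ (⊤ : ℕ∞) (dX (dV L c) d) 𝒜 := fun c d => contDiffOn_dX h𝒜open (hL1 c) d
  -- homogeneity of the first derivatives
  have hkey : ∀ q ∈ 𝒜, ∀ l : ℝ, 0 < l → ∀ v w : Fin n → ℝ,
      fderiv ℝ L (q.1, l • q.2) (v, l • w) = l ^ 2 * fderiv ℝ L q (v, w) := by
    intro q hq l hl v w
    set A : TPt n →L[ℝ] TPt n :=
      (ContinuousLinearMap.id ℝ (Fin n → ℝ)).prodMap
        (l • ContinuousLinearMap.id ℝ (Fin n → ℝ)) with hAdef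
    have hA : ∀ r : TPt n, A r = (r.1, l • r.2) := fun r => rfl
    have hql : ((q.1, l • q.2) : TPt n) ∈ 𝒜 := h𝒜conic q hq l hl
    have hdL : DifferentiableAt ℝ L (A q) := by
      rw [hA q]; exact diffAt_of_contDiffOn h𝒜open hL hql
    have hdLq : DifferentiableAt ℝ L q := diffAt_of_contDiffOn h𝒜open hL hq
    have h1 : fderiv ℝ (fun r => L (A r)) q = (fderiv ℝ L (A q)).comp A :=
      (hdL.hasFDerivAt.comp q A.hasFDerivAt).fderiv
    have h2 : fderiv ℝ (fun r => L (A r)) q = fderiv ℝ (fun r => l ^ 2 * L r) q := by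
      apply Filter.EventuallyEq.fderiv_eq
      filter_upwards [h𝒜open.mem_nhds hq] with r hr
      rw [hA r]; exact hhom r hr l hl
    have h3 : fderiv ℝ (fun r => l ^ 2 * L r) q = (l ^ 2) • fderiv ℝ L q :=
      fderiv_const_mul hdLq _
    have h4 := congrArg (fun T : TPt n →L[ℝ] ℝ => T (v, w)) (h1.symm.trans (h2.trans h3))
    simp only [ContinuousLinearMap.comp_apply, ContinuousLinearMap.smul_apply,
      smul_eq_mul] at h4
    rw [hA q, hA (v, w)] at h4
    exact h4
  have hdXhom : ∀ q ∈ 𝒜, ∀ c, ∀ l : ℝ, 0 < l →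
      dX L c (q.1, l • q.2) = l ^ 2 * dX L c q := by
    intro q hq c l hl
    have h := hkey q hq l hl (Pi.single c 1) 0
    simpa [dX, smul_zero] using h
  have hdVhom : ∀ q ∈ 𝒜, ∀ b, ∀ l : ℝ, 0 < l →
      dV L b (q.1, l • q.2) = l ^ 1 * dV L b q := by
    intro q hq b l hl
    have h := hkey q hq l hl 0 (Pi.single b 1)
    have hsm : (((0 : Fin n → ℝ), l • (Pi.single b 1 : Fin n → ℝ)) : TPt n) =
        l • (((0 : Fin n → ℝ), Pi.single b 1) : TPt n) := by
      rw [Prod.smul_mk, smul_zero]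
    rw [hsm, map_smul, smul_eq_mul] at h
    have h' : l * dV L b (q.1, l • q.2) = l * (l ^ 1 * dV L b q) := by
      unfold dV; rw [h]; ring
    exact mul_left_cancel₀ (ne_of_gt hl) h'
  -- Euler identities for first derivatives
  have euldV : ∀ q ∈ 𝒜, ∀ b, ∑ a', q.2 a' * dV (dV L b) a' q = dV L b q := by
    intro q hq b
    have h := euler_fderiv (diffAt_of_contDiffOn h𝒜open (hL1 b) hq) 1
      (fun l hl => hdVhom q hq b l hl)
    rw [fderiv_apply_v] at h
    simpa using h
  have euldX : ∀ q ∈ 𝒜, ∀ c, ∑ b, q.2 b * dV (dX L c) b q = 2 * dX L c q := by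
    intro q hq c
    have h := euler_fderiv (diffAt_of_contDiffOn h𝒜open (hLX c) hq) 2
      (fun l hl => hdXhom q hq c l hl)
    rw [fderiv_apply_v] at h
    simpa using h
  -- metric facts
  have hgdV : ∀ (q : TPt n) (a b : Fin n), dV (dV L b) a q = 2 * gMat L q a b := by
    intro q a b
    show dV (dV L b) a q = 2 * ((1/2) * dV (dV L b) a q)
    ring
  have hgg : ∀ q ∈ 𝒜, ∀ a c, ∑ b, gMat L q a b * ((gMat L q)⁻¹) b c
      = if a = c then (1:ℝ) else 0 := by
    intro q hq a c
    have h := Matrix.mul_nonsing_inv _ (hg q hq)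
    have h2 := congrFun (congrFun h a) c
    simpa [Matrix.mul_apply, Matrix.one_apply] using h2
  -- spray rewriting and differentiability
  have hsprayQ : ∀ (b : Fin n) (q : TPt n),
      spray L b q = (1/4) * ∑ c, ((gMat L q)⁻¹) b c * Qc L c q := fun b q => rfl
  have hgent : ∀ q ∈ 𝒜, ∀ i j, DifferentiableAt ℝ (fun r => gMat L r i j) q := by
    intro q hq i j
    exact (diffAt_of_contDiffOn h𝒜open (hL2 i j) hq).const_mul _
  have hdet_ne : ∀ q ∈ 𝒜, (gMat L q).det ≠ 0 := fun q hq =>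
    (isUnit_iff_ne_zero.mp (hg q hq))
  have hsnd : ∀ (d : Fin n) (q : TPt n), DifferentiableAt ℝ (fun r : TPt n => r.2 d) q := by
    intro d q
    exact ((ContinuousLinearMap.proj d).comp
      (ContinuousLinearMap.snd ℝ (Fin n → ℝ) (Fin n → ℝ))).differentiableAt
  have hQdiff : ∀ q ∈ 𝒜, ∀ c, DifferentiableAt ℝ (Qc L c) q := by
    intro q hq c
    apply DifferentiableAt.sub
    · apply DifferentiableAt.fun_sum
      intro d _
      exact (hsnd d q).mul (diffAt_of_contDiffOn h𝒜open (hL2X c d) hq)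
    · exact diffAt_of_contDiffOn h𝒜open (hLX c) hq
  have hsprayd : ∀ q ∈ 𝒜, ∀ b, DifferentiableAt ℝ (spray L b) q := by
    intro q hq b
    have heq : spray L b = fun r => (1/4) * ∑ c,
        (((gMat L r).det)⁻¹ * (gMat L r).adjugate b c) * Qc L c r := by
      funext r
      rw [hsprayQ b r]
      congr 1
      exact Finset.sum_congr rfl fun c _ => by rw [inv_entry_eq]
    rw [heq]
    apply DifferentiableAt.const_mul
    apply DifferentiableAt.fun_sum
    intro c _
    exact (((differentiableAt_det (fun i j => hgent q hq i j)).inv (hdet_ne q hq)).mul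
      (differentiableAt_adjugate (fun i j => hgent q hq i j) b c)).mul (hQdiff q hq c)
  -- the key pointwise identity P
  have hQsum : ∀ q ∈ 𝒜, ∑ c, q.2 c * Qc L c q = ∑ c, q.2 c * dX L c q := by
    intro q hq
    have h1 : ∑ c, q.2 c * Qc L c q
        = (∑ c, ∑ d, q.2 c * (q.2 d * dX (dV L c) d q)) - ∑ c, q.2 c * dX L c q := by
      rw [← Finset.sum_sub_distrib]
      refine Finset.sum_congr rfl fun c _ => ?_
      rw [Qc, mul_sub, Finset.mul_sum]
    have h2 : ∀ d, ∑ c, q.2 c * (q.2 d * dX (dV L c) d q) = q.2 d * (2 * dX L d q) := by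
      intro d
      have h3 : ∑ c, q.2 c * dV (dX L d) c q = 2 * dX L d q := euldX q hq d
      calc ∑ c, q.2 c * (q.2 d * dX (dV L c) d q)
          = q.2 d * ∑ c, q.2 c * dX (dV L c) d q := by
            rw [Finset.mul_sum]
            exact Finset.sum_congr rfl fun c _ => by ring
        _ = q.2 d * ∑ c, q.2 c * dV (dX L d) c q := by
            congr 1
            exact Finset.sum_congr rfl fun c _ => by
              rw [dX_dV_symm h𝒜open hL hq]
        _ = q.2 d * (2 * dX L d q) := by rw [h3]
    rw [h1, Finset.sum_comm]
    rw [Finset.sum_congr rfl fun d _ => h2 d]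
    rw [← Finset.sum_sub_distrib]
    exact Finset.sum_congr rfl fun c _ => by ring
  have hP : ∀ q ∈ 𝒜, ∑ b, dV L b q * spray L b q = (1/2) * ∑ c, q.2 c * dX L c q := by
    intro q hq
    have hdVb : ∀ b, dV L b q = ∑ a', q.2 a' * (2 * gMat L q a' b) := by
      intro b
      rw [← euldV q hq b]
      exact Finset.sum_congr rfl fun a' _ => by rw [hgdV q a' b]
    have h4 : ∀ b, dV L b q * spray L b q
        = ∑ a', ∑ c, q.2 a' * ((1/2) * (gMat L q a' b * (((gMat L q)⁻¹) b c * Qc L c q))) := by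
      intro b
      rw [hdVb b, hsprayQ b q, Finset.sum_mul]
      refine Finset.sum_congr rfl fun a' _ => ?_
      rw [Finset.mul_sum, Finset.mul_sum]
      exact Finset.sum_congr rfl fun c _ => by ring
    calc ∑ b, dV L b q * spray L b q
        = ∑ b, ∑ a', ∑ c, q.2 a' * ((1/2) * (gMat L q a' b * (((gMat L q)⁻¹) b c * Qc L c q))) :=
          Finset.sum_congr rfl fun b _ => h4 b
      _ = ∑ a', ∑ b, ∑ c, q.2 a' * ((1/2) * (gMat L q a' b * (((gMat L q)⁻¹) b c * Qc L c q))) :=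
          Finset.sum_comm
      _ = ∑ a', ∑ c, ∑ b, q.2 a' * ((1/2) * (gMat L q a' b * (((gMat L q)⁻¹) b c * Qc L c q))) :=
          Finset.sum_congr rfl fun a' _ => Finset.sum_comm
      _ = ∑ a', ∑ c, (q.2 a' * ((1/2) * Qc L c q)) * (if a' = c then (1:ℝ) else 0) := by
          refine Finset.sum_congr rfl fun a' _ => Finset.sum_congr rfl fun c _ => ?_
          rw [← hgg q hq a' c, Finset.mul_sum]
          exact Finset.sum_congr rfl fun b _ => by ring
      _ = ∑ a', q.2 a' * ((1/2) * Qc L a' q) := by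
          refine Finset.sum_congr rfl fun a' _ => ?_
          simp [mul_ite, Finset.sum_ite_eq]
      _ = (1/2) * ∑ c, q.2 c * Qc L c q := by
          rw [Finset.mul_sum]
          exact Finset.sum_congr rfl fun c _ => by ring
      _ = (1/2) * ∑ c, q.2 c * dX L c q := by rw [hQsum q hq]
  -- now differentiate P in the direction (0, e_a)
  intro p hp a
  have hdVdiff : ∀ b, DifferentiableAt ℝ (dV L b) p := fun b =>
    diffAt_of_contDiffOn h𝒜open (hL1 b) hp
  have hdXdiff : ∀ c, DifferentiableAt ℝ (dX L c) p := fun c =>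
    diffAt_of_contDiffOn h𝒜open (hLX c) hp
  have hFH : fderiv ℝ (fun q => ∑ b, dV L b q * spray L b q) p
      = fderiv ℝ (fun q => (1/2) * ∑ c, q.2 c * dX L c q) p := by
    apply Filter.EventuallyEq.fderiv_eq
    filter_upwards [h𝒜open.mem_nhds hp] with q hq using hP q hq
  have hdVF : fderiv ℝ (fun q => ∑ b, dV L b q * spray L b q) p (0, Pi.single a 1)
      = ∑ b, (dV (dV L b) a p * spray L b p + dV L b p * dV (spray L b) a p) := by
    rw [fderiv_fun_sum (fun b _ => (hdVdiff b).fun_mul (hsprayd p hp b)),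
      ContinuousLinearMap.sum_apply]
    refine Finset.sum_congr rfl fun b _ => ?_
    rw [fderiv_fun_mul (hdVdiff b) (hsprayd p hp b)]
    simp only [ContinuousLinearMap.add_apply, ContinuousLinearMap.smul_apply, smul_eq_mul]
    show dV L b p * fderiv ℝ (spray L b) p (0, Pi.single a 1)
        + spray L b p * fderiv ℝ (dV L b) p (0, Pi.single a 1) = _
    unfold dV
    ring
  have hproj : ∀ c : Fin n, fderiv ℝ (fun q : TPt n => q.2 c) p (0, Pi.single a 1)
      = (Pi.single a 1 : Fin n → ℝ) c := by
    intro c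
    have h := ((ContinuousLinearMap.proj c).comp
      (ContinuousLinearMap.snd ℝ (Fin n → ℝ) (Fin n → ℝ))).fderiv (x := p)
    rw [show (fun q : TPt n => q.2 c) = ⇑((ContinuousLinearMap.proj c).comp
      (ContinuousLinearMap.snd ℝ (Fin n → ℝ) (Fin n → ℝ))) from rfl, h]
    rfl
  have hdVH : fderiv ℝ (fun q => (1/2) * ∑ c, q.2 c * dX L c q) p (0, Pi.single a 1)
      = (1/2) * (dX L a p + ∑ c, p.2 c * dX (dV L a) c p) := by
    rw [fderiv_const_mul (DifferentiableAt.fun_sum fun c _ => (hsnd c p).fun_mul (hdXdiff c)) _]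
    rw [ContinuousLinearMap.smul_apply, smul_eq_mul]
    congr 1
    rw [fderiv_fun_sum (fun c _ => (hsnd c p).fun_mul (hdXdiff c)), ContinuousLinearMap.sum_apply]
    have h7 : ∀ c, fderiv ℝ (fun q : TPt n => q.2 c * dX L c q) p (0, Pi.single a 1)
        = p.2 c * dX (dV L a) c p + dX L c p * (Pi.single a 1 : Fin n → ℝ) c := by
      intro c
      rw [fderiv_fun_mul (hsnd c p) (hdXdiff c)]
      simp only [ContinuousLinearMap.add_apply, ContinuousLinearMap.smul_apply, smul_eq_mul]
      rw [hproj c]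
      have h8 : fderiv ℝ (dX L c) p (0, Pi.single a 1) = dX (dV L a) c p := by
        show dV (dX L c) a p = dX (dV L a) c p
        exact (dX_dV_symm h𝒜open hL hp a c).symm
      rw [h8]
    rw [Finset.sum_congr rfl fun c _ => h7 c, Finset.sum_add_distrib]
    have h9 : ∑ c, dX L c p * (Pi.single a 1 : Fin n → ℝ) c = dX L a p := by
      simp [Pi.single_apply, mul_ite]
    rw [h9, add_comm]
  have hsum1 : ∑ b, dV (dV L b) a p * spray L b p = (1/2) * Qc L a p := by
    have h5 : ∀ b, dV (dV L b) a p * spray L b p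
        = ∑ c, ((1/2) * Qc L c p) * (gMat L p a b * ((gMat L p)⁻¹) b c) := by
      intro b
      rw [hgdV p a b, hsprayQ b p, Finset.mul_sum, Finset.mul_sum]
      exact Finset.sum_congr rfl fun c _ => by ring
    calc ∑ b, dV (dV L b) a p * spray L b p
        = ∑ b, ∑ c, ((1/2) * Qc L c p) * (gMat L p a b * ((gMat L p)⁻¹) b c) :=
          Finset.sum_congr rfl fun b _ => h5 b
      _ = ∑ c, ∑ b, ((1/2) * Qc L c p) * (gMat L p a b * ((gMat L p)⁻¹) b c) :=
          Finset.sum_comm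
      _ = ∑ c, ((1/2) * Qc L c p) * (if a = c then (1:ℝ) else 0) := by
          refine Finset.sum_congr rfl fun c _ => ?_
          rw [← hgg p hp a c, Finset.mul_sum]
      _ = (1/2) * Qc L a p := by simp [mul_ite, Finset.sum_ite_eq]
  have hmain : ∑ b, (dV (dV L b) a p * spray L b p + dV L b p * dV (spray L b) a p)
      = (1/2) * (dX L a p + ∑ c, p.2 c * dX (dV L a) c p) := by
    rw [← hdVF, hFH, hdVH]
  rw [Finset.sum_add_distrib, hsum1] at hmain
  have hQa : Qc L a p = (∑ c, p.2 c * dX (dV L a) c p) - dX L a p := rfl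
  rw [hQa] at hmain
  have hcomm : ∑ b, dV (spray L b) a p * dV L b p = ∑ b, dV L b p * dV (spray L b) a p :=
    Finset.sum_congr rfl fun b _ => mul_comm _ _
  rw [hcomm]
  linarith [hmain]
end
end

section
/- Let L be a pseudo-Finsler Lagrangian on 𝒜. If Γᶜ_{ab} and Γ̃ᶜ_{ab} are two families of smooth real-valued functions of x only, each symmetric in the lower indices (a,b), and both satisfy ∂L/∂xᵃ − Γᶜ_{ab}(x)ẋᵇ∂L/∂ẋᶜ = 0 and ∂L/∂xᵃ − Γ̃ᶜ_{ab}(x)ẋᵇ∂L/∂ẋᶜ = 0 at every point of 𝒜 and for every index a, then Γᶜ_{ab}(x) = Γ̃ᶜ_{ab}(x) for every x whose fiber 𝒜ₓ = {ẋ : (x,ẋ) ∈ 𝒜} is nonempty. In other words, if L is of Berwald type, the torsion-free affine connection making L horizontally constant is unique. -/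
noncomputable section
open scoped BigOperators

lemma quad_expand {n : ℕ} (E : Fin n → Fin n → ℝ) (u v : Fin n → ℝ) (t : ℝ) :
    ∑ a, ∑ b, E a b * (u a + t * v a) * (u b + t * v b)
    = (∑ a, ∑ b, E a b * u a * u b)
      + t * (∑ a, ∑ b, E a b * (u a * v b + v a * u b))
      + t ^ 2 * (∑ a, ∑ b, E a b * v a * v b) := by
  simp only [Finset.mul_sum, ← Finset.sum_add_distrib]
  exact Finset.sum_congr rfl fun a _ => Finset.sum_congr rfl fun b _ => by ring

lemma single_pair {n : ℕ} (E : Fin n → Fin n → ℝ) (a0 b0 : Fin n) :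
    ∑ a, ∑ b, E a b * ((Pi.single a0 (1:ℝ) : Fin n → ℝ)) a
      * ((Pi.single b0 (1:ℝ) : Fin n → ℝ)) b = E a0 b0 := by
  simp [Pi.single_apply, mul_ite, ite_mul, mul_zero, zero_mul, mul_one,
    Finset.sum_ite_eq', Finset.mem_univ]

lemma cross_pair {n : ℕ} (E : Fin n → Fin n → ℝ) (a0 b0 : Fin n) :
    ∑ a, ∑ b, E a b * ((Pi.single a0 (1:ℝ) : Fin n → ℝ) a * (Pi.single b0 (1:ℝ) : Fin n → ℝ) b
      + (Pi.single b0 (1:ℝ) : Fin n → ℝ) a * (Pi.single a0 (1:ℝ) : Fin n → ℝ) b)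
    = E a0 b0 + E b0 a0 := by
  have h1 := single_pair E a0 b0
  have h2 := single_pair E b0 a0
  calc ∑ a, ∑ b, E a b * ((Pi.single a0 (1:ℝ) : Fin n → ℝ) a * (Pi.single b0 (1:ℝ) : Fin n → ℝ) b
      + (Pi.single b0 (1:ℝ) : Fin n → ℝ) a * (Pi.single a0 (1:ℝ) : Fin n → ℝ) b)
      = (∑ a, ∑ b, E a b * (Pi.single a0 (1:ℝ) : Fin n → ℝ) a * (Pi.single b0 (1:ℝ) : Fin n → ℝ) b)
        + ∑ a, ∑ b, E a b * (Pi.single b0 (1:ℝ) : Fin n → ℝ) a * (Pi.single a0 (1:ℝ) : Fin n → ℝ) b := by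
        rw [← Finset.sum_add_distrib]
        refine Finset.sum_congr rfl fun a _ => ?_
        rw [← Finset.sum_add_distrib]
        exact Finset.sum_congr rfl fun b _ => by ring
    _ = E a0 b0 + E b0 a0 := by rw [h1, h2]

lemma split_aux {n : ℕ} (E : Fin n → Fin n → Fin n → ℝ) (y φ K : Fin n → ℝ) (d : Fin n) :
    (∑ a, ∑ c, ∑ b, E c a b *
        (y a * (y b * K c + φ c * (Pi.single d (1:ℝ) : Fin n → ℝ) b)
          + y b * φ c * (Pi.single d (1:ℝ) : Fin n → ℝ) a))
    = (∑ c, (∑ a, ∑ b, E c a b * y a * y b) * K c)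
      + (∑ a, ∑ c, E c a d * y a * φ c)
      + (∑ c, ∑ b, E c d b * y b * φ c) := by
  have h1 : ∀ a c, (∑ b, E c a b *
        (y a * (y b * K c + φ c * (Pi.single d (1:ℝ) : Fin n → ℝ) b)
          + y b * φ c * (Pi.single d (1:ℝ) : Fin n → ℝ) a))
      = (∑ b, E c a b * y a * y b * K c) + (E c a d * y a * φ c)
        + (if a = d then ∑ b, E c a b * y b * φ c else 0) := by
    intro a c
    have h0 : ∀ b, E c a b *
        (y a * (y b * K c + φ c * (Pi.single d (1:ℝ) : Fin n → ℝ) b)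
          + y b * φ c * (Pi.single d (1:ℝ) : Fin n → ℝ) a)
        = E c a b * y a * y b * K c
          + (if b = d then E c a b * y a * φ c else 0)
          + (if a = d then E c a b * y b * φ c else 0) := by
      intro b
      simp only [Pi.single_apply]
      by_cases hb : b = d <;> by_cases ha : a = d <;> simp [hb, ha] <;> ring
    simp only [h0, Finset.sum_add_distrib, Finset.sum_ite_eq', Finset.mem_univ, if_true,
      Finset.sum_ite_irrel, Finset.sum_const_zero]
  simp only [h1, Finset.sum_add_distrib]
  congr 1
  · congr 1
    · rw [Finset.sum_comm]
      refine Finset.sum_congr rfl fun c _ => ?_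
      simp only [Finset.sum_mul]
  · rw [Finset.sum_comm]
    simp [Finset.sum_ite_eq', Finset.mem_univ]

/-- uniqueness of the Berwald connection.
If two torsion-free affine connections `Γ`, `Γ'` (smooth functions of `x` only) both make the
pseudo-Finsler Lagrangian `L` horizontally constant on `𝒜`, then they coincide over every base
point `x` with nonempty fiber `𝒜ₓ`. -/
theorem stmt2 (n : ℕ) (hn : 1 ≤ n)
    (𝒜 : Set (TPt n)) (h𝒜open : IsOpen 𝒜) (h𝒜ne : 𝒜.Nonempty)
    (h𝒜slit : ∀ p ∈ 𝒜, p.2 ≠ 0)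
    (h𝒜conic : ∀ p ∈ 𝒜, ∀ l : ℝ, 0 < l → (p.1, l • p.2) ∈ 𝒜)
    (L : TPt n → ℝ) (hL : ContDiffOn ℝ (⊤ : ℕ∞) L 𝒜)
    (hhom : ∀ p ∈ 𝒜, ∀ l : ℝ, 0 < l → L (p.1, l • p.2) = l ^ 2 * L p)
    (hg : ∀ p ∈ 𝒜, IsUnit (gMat L p).det)
    (Γ Γ' : (Fin n → ℝ) → Fin n → Fin n → Fin n → ℝ)
    (hΓsmooth : ∀ c a b, ContDiff ℝ (⊤ : ℕ∞) (fun x => Γ x c a b))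
    (hΓ'smooth : ∀ c a b, ContDiff ℝ (⊤ : ℕ∞) (fun x => Γ' x c a b))
    (hΓsym : ∀ x c a b, Γ x c a b = Γ x c b a)
    (hΓ'sym : ∀ x c a b, Γ' x c a b = Γ' x c b a)
    (hhor : ∀ p ∈ 𝒜, ∀ a,
      dX L a p - ∑ c, ∑ b, Γ p.1 c a b * p.2 b * dV L c p = 0)
    (hhor' : ∀ p ∈ 𝒜, ∀ a,
      dX L a p - ∑ c, ∑ b, Γ' p.1 c a b * p.2 b * dV L c p = 0) :
    ∀ x : Fin n → ℝ, (∃ y, (x, y) ∈ 𝒜) → ∀ c a b, Γ x c a b = Γ' x c a b := by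
  classical
  -- smoothness of the fiber derivatives of L
  have hfd : ContDiffOn ℝ (⊤ : ℕ∞) (fun p => fderiv ℝ L p) 𝒜 := hL.fderiv_of_isOpen h𝒜open (by simp)
  have hdV : ∀ c, ContDiffOn ℝ (⊤ : ℕ∞) (dV L c) 𝒜 := fun c =>
    (ContinuousLinearMap.apply ℝ ℝ ((0, Pi.single c 1) : TPt n)).contDiff.comp_contDiffOn hfd
  have hdVdiff : ∀ c, ∀ p ∈ 𝒜, DifferentiableAt ℝ (dV L c) p := fun c p hp =>
    (((hdV c).differentiableOn (by simp)).differentiableAt (h𝒜open.mem_nhds hp))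
  -- Step A : the difference of the two horizontality identities
  have ident : ∀ q ∈ 𝒜, ∀ a,
      ∑ c, ∑ b, (Γ q.1 c a b - Γ' q.1 c a b) * q.2 b * dV L c q = 0 := by
    intro q hq a
    have h1 := hhor q hq a
    have h2 := hhor' q hq a
    have h3 : ∑ c, ∑ b, (Γ q.1 c a b - Γ' q.1 c a b) * q.2 b * dV L c q
        = (∑ c, ∑ b, Γ q.1 c a b * q.2 b * dV L c q)
          - (∑ c, ∑ b, Γ' q.1 c a b * q.2 b * dV L c q) := by
      rw [← Finset.sum_sub_distrib]
      refine Finset.sum_congr rfl fun c _ => ?_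
      rw [← Finset.sum_sub_distrib]
      exact Finset.sum_congr rfl fun b _ => by ring
    rw [h3]; linarith
  -- Step B/C : the quadratic form vanishes on every fiber
  have key : ∀ x y, (x, y) ∈ 𝒜 → ∀ c,
      ∑ a, ∑ b, (Γ x c a b - Γ' x c a b) * y a * y b = 0 := by
    intro x y hp
    have hUopen : IsOpen {v : Fin n → ℝ | (x, v) ∈ 𝒜} :=
      h𝒜open.preimage (continuous_const.prodMk continuous_id)
    -- the contracted identity, as a function of the velocity only
    have hf0 : ∀ v, (x, v) ∈ 𝒜 →
        (∑ a, ∑ c, ∑ b, (Γ x c a b - Γ' x c a b) * (v a * (v b * dV L c (x, v)))) = 0 := by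
      intro v hv
      have hcalc : (∑ a, ∑ c, ∑ b, (Γ x c a b - Γ' x c a b) * (v a * (v b * dV L c (x, v))))
          = ∑ a, v a * ∑ c, ∑ b, (Γ x c a b - Γ' x c a b) * v b * dV L c (x, v) := by
        refine Finset.sum_congr rfl fun a _ => ?_
        rw [Finset.mul_sum]
        refine Finset.sum_congr rfl fun c _ => ?_
        rw [Finset.mul_sum]
        exact Finset.sum_congr rfl fun b _ => by ring
      rw [hcalc]
      refine Finset.sum_eq_zero fun a _ => ?_
      have hida : ∑ c, ∑ b, (Γ x c a b - Γ' x c a b) * v b * dV L c (x, v) = 0 :=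
        ident (x, v) hv a
      rw [hida, mul_zero]
    -- the derivative of this vanishing function
    have hΦ : ∀ c, HasFDerivAt (fun v => dV L c (x, v))
        ((fderiv ℝ (dV L c) (x, y)).comp (ContinuousLinearMap.inr ℝ (Fin n → ℝ) (Fin n → ℝ)))
        y :=
      fun c => ((hdVdiff c (x, y) hp).hasFDerivAt).comp y (hasFDerivAt_prodMk_right x y)
    have hproj : ∀ a : Fin n, HasFDerivAt (fun v : Fin n → ℝ => v a)
        (ContinuousLinearMap.proj a : (Fin n → ℝ) →L[ℝ] ℝ) y := by
      intro a
      have h := (ContinuousLinearMap.proj a : (Fin n → ℝ) →L[ℝ] ℝ).hasFDerivAt (x := y)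
      exact h
    have htot : HasFDerivAt
        (fun v => ∑ a, ∑ c, ∑ b, (Γ x c a b - Γ' x c a b) * (v a * (v b * dV L c (x, v))))
        (∑ a, ∑ c, ∑ b, (Γ x c a b - Γ' x c a b) •
          (y a • (y b • ((fderiv ℝ (dV L c) (x, y)).comp
              (ContinuousLinearMap.inr ℝ (Fin n → ℝ) (Fin n → ℝ)))
            + dV L c (x, y) • ContinuousLinearMap.proj b)
            + (y b * dV L c (x, y)) • ContinuousLinearMap.proj a)) y := by
      refine HasFDerivAt.fun_sum fun a _ => HasFDerivAt.fun_sum fun c _ => HasFDerivAt.fun_sum fun b _ => ?_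
      exact ((hproj a).mul ((hproj b).mul (hΦ c))).const_mul (Γ x c a b - Γ' x c a b)
    have hzero : HasFDerivAt
        (fun v => ∑ a, ∑ c, ∑ b, (Γ x c a b - Γ' x c a b) * (v a * (v b * dV L c (x, v))))
        (0 : (Fin n → ℝ) →L[ℝ] ℝ) y := by
      have hev : (fun v => ∑ a, ∑ c, ∑ b,
          (Γ x c a b - Γ' x c a b) * (v a * (v b * dV L c (x, v)))) =ᶠ[nhds y] fun _ => 0 := by
        filter_upwards [hUopen.mem_nhds (show y ∈ _ from hp)] with v hv
        exact hf0 v hv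
      exact (hasFDerivAt_const (0 : ℝ) y).congr_of_eventuallyEq hev
    have hD0 := htot.unique hzero
    -- evaluate the vanishing derivative on basis vectors
    have hquad : ∀ d,
        (∑ c, (∑ a, ∑ b, (Γ x c a b - Γ' x c a b) * y a * y b) * dV (dV L c) d (x, y))
        + (∑ a, ∑ c, (Γ x c a d - Γ' x c a d) * y a * dV L c (x, y))
        + (∑ c, ∑ b, (Γ x c d b - Γ' x c d b) * y b * dV L c (x, y)) = 0 := by
      intro d
      have happ := congrArg (fun T : (Fin n → ℝ) →L[ℝ] ℝ => T (Pi.single d 1)) hD0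
      have hΦd : ∀ c, ((fderiv ℝ (dV L c) (x, y)).comp
          (ContinuousLinearMap.inr ℝ (Fin n → ℝ) (Fin n → ℝ))) (Pi.single d 1)
          = dV (dV L c) d (x, y) := fun c => rfl
      simp only [ContinuousLinearMap.sum_apply, ContinuousLinearMap.add_apply,
        ContinuousLinearMap.smul_apply, ContinuousLinearMap.proj_apply, smul_eq_mul,
        ContinuousLinearMap.zero_apply, hΦd] at happ
      rw [← split_aux (fun c a b => Γ x c a b - Γ' x c a b) y
        (fun c => dV L c (x, y)) (fun c => dV (dV L c) d (x, y)) d]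
      exact happ
    -- the two linear terms vanish by the contracted identity
    have hcubiczero : ∀ d,
        ∑ c, (∑ a, ∑ b, (Γ x c a b - Γ' x c a b) * y a * y b) * dV (dV L c) d (x, y) = 0 := by
      intro d
      have hI2' : ∑ c, ∑ b, (Γ x c d b - Γ' x c d b) * y b * dV L c (x, y) = 0 :=
        ident (x, y) hp d
      have hI1' : ∑ a, ∑ c, (Γ x c a d - Γ' x c a d) * y a * dV L c (x, y) = 0 := by
        rw [Finset.sum_comm]
        calc ∑ c, ∑ a, (Γ x c a d - Γ' x c a d) * y a * dV L c (x, y)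
            = ∑ c, ∑ a, (Γ x c d a - Γ' x c d a) * y a * dV L c (x, y) := by
              refine Finset.sum_congr rfl fun c _ => Finset.sum_congr rfl fun a _ => ?_
              rw [hΓsym x c a d, hΓ'sym x c a d]
          _ = 0 := ident (x, y) hp d
      linarith [hquad d]
    -- invertibility of g kills the quadratic form
    intro c
    have hmv : Matrix.mulVec (gMat L (x, y))
        (fun c' => ∑ a, ∑ b, (Γ x c' a b - Γ' x c' a b) * y a * y b) = 0 := by
      funext d
      have h := hcubiczero d
      simp only [Matrix.mulVec, dotProduct, Pi.zero_apply]
      calc ∑ c', gMat L (x, y) d c' * (∑ a, ∑ b, (Γ x c' a b - Γ' x c' a b) * y a * y b)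
          = (1/2) * ∑ c', (∑ a, ∑ b, (Γ x c' a b - Γ' x c' a b) * y a * y b)
              * dV (dV L c') d (x, y) := by
            rw [Finset.mul_sum]
            refine Finset.sum_congr rfl fun c' _ => ?_
            show ((1:ℝ)/2 * dV (dV L c') d (x, y)) * _ = _
            ring
        _ = 0 := by rw [h, mul_zero]
    have hvz : (fun c' => ∑ a, ∑ b, (Γ x c' a b - Γ' x c' a b) * y a * y b)
        = (0 : Fin n → ℝ) := by
      have hinv := Matrix.nonsing_inv_mul (gMat L (x, y)) (hg (x, y) hp)
      calc (fun c' => ∑ a, ∑ b, (Γ x c' a b - Γ' x c' a b) * y a * y b)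
          = Matrix.mulVec (1 : Matrix (Fin n) (Fin n) ℝ)
              (fun c' => ∑ a, ∑ b, (Γ x c' a b - Γ' x c' a b) * y a * y b) :=
            (Matrix.one_mulVec _).symm
        _ = Matrix.mulVec ((gMat L (x, y))⁻¹ * gMat L (x, y))
              (fun c' => ∑ a, ∑ b, (Γ x c' a b - Γ' x c' a b) * y a * y b) := by rw [hinv]
        _ = Matrix.mulVec (gMat L (x, y))⁻¹ (Matrix.mulVec (gMat L (x, y))
              (fun c' => ∑ a, ∑ b, (Γ x c' a b - Γ' x c' a b) * y a * y b)) := by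
            rw [← Matrix.mulVec_mulVec]
        _ = 0 := by rw [hmv, Matrix.mulVec_zero]
    exact congrFun hvz c
  -- Step D : polarization over an open fiber
  intro x hx c a b
  obtain ⟨y0, hy0⟩ := hx
  have hU : IsOpen {v : Fin n → ℝ | (x, v) ∈ 𝒜} :=
    h𝒜open.preimage (continuous_const.prodMk continuous_id)
  obtain ⟨ε, hε, hball⟩ := Metric.isOpen_iff.1 hU y0 hy0
  have hQ : ∀ w : Fin n → ℝ,
      ∑ a', ∑ b', (Γ x c a' b' - Γ' x c a' b') * w a' * w b' = 0 := by
    intro w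
    set t : ℝ := ε / (2 * (‖w‖ + 1)) with htdef
    have hw1 : (0:ℝ) < ‖w‖ + 1 := by positivity
    have ht : 0 < t := by positivity
    have hmem : ∀ s : ℝ, |s| ≤ t → (x, y0 + s • w) ∈ 𝒜 := by
      intro s hs
      apply hball
      simp only [Metric.mem_ball, dist_eq_norm, add_sub_cancel_left]
      have h1 : ‖s • w‖ = |s| * ‖w‖ := by rw [norm_smul, Real.norm_eq_abs]
      have h2 : |s| * ‖w‖ ≤ t * ‖w‖ :=
        mul_le_mul_of_nonneg_right hs (norm_nonneg w)
      have h3 : t * ‖w‖ < ε := by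
        have h4 : t * (2 * (‖w‖ + 1)) = ε := by
          rw [htdef]; field_simp
        nlinarith [norm_nonneg w]
      rw [h1]; linarith
    have hexp : ∀ s : ℝ,
        ∑ a', ∑ b', (Γ x c a' b' - Γ' x c a' b') * (y0 + s • w) a' * (y0 + s • w) b'
        = (∑ a', ∑ b', (Γ x c a' b' - Γ' x c a' b') * y0 a' * y0 b')
          + s * (∑ a', ∑ b', (Γ x c a' b' - Γ' x c a' b') * (y0 a' * w b' + w a' * y0 b'))
          + s ^ 2 * (∑ a', ∑ b', (Γ x c a' b' - Γ' x c a' b') * w a' * w b') := by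
      intro s
      have h := quad_expand (fun a' b' => Γ x c a' b' - Γ' x c a' b') y0 w s
      simpa [Pi.add_apply, Pi.smul_apply, smul_eq_mul] using h
    have h0 := key x y0 hy0 c
    have hplus := key x (y0 + t • w) (hmem t (by rw [abs_of_pos ht])) c
    have hminus := key x (y0 + (-t) • w) (hmem (-t) (by rw [abs_neg, abs_of_pos ht])) c
    rw [hexp t] at hplus
    rw [hexp (-t)] at hminus
    have ht2 : t ^ 2 > 0 := by positivity
    nlinarith [hplus, hminus, h0, ht2]
  -- conclude by polarization on basis vectors
  have haa := hQ (Pi.single a 1)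
  have hbb := hQ (Pi.single b 1)
  have hab := hQ (Pi.single a 1 + Pi.single b 1)
  have hsa : ∑ a', ∑ b', (Γ x c a' b' - Γ' x c a' b')
      * (Pi.single a (1:ℝ) : Fin n → ℝ) a' * (Pi.single a (1:ℝ) : Fin n → ℝ) b'
      = Γ x c a a - Γ' x c a a := single_pair _ a a
  have hsb : ∑ a', ∑ b', (Γ x c a' b' - Γ' x c a' b')
      * (Pi.single b (1:ℝ) : Fin n → ℝ) a' * (Pi.single b (1:ℝ) : Fin n → ℝ) b'
      = Γ x c b b - Γ' x c b b := single_pair _ b b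
  have hexp1 := quad_expand (fun a' b' => Γ x c a' b' - Γ' x c a' b')
      (Pi.single a (1:ℝ)) (Pi.single b (1:ℝ)) 1
  have hcross := cross_pair (fun a' b' => Γ x c a' b' - Γ' x c a' b') a b
  have hab' : ∑ a', ∑ b', (Γ x c a' b' - Γ' x c a' b')
      * ((Pi.single a (1:ℝ) : Fin n → ℝ) + (Pi.single b (1:ℝ) : Fin n → ℝ)) a'
      * ((Pi.single a (1:ℝ) : Fin n → ℝ) + (Pi.single b (1:ℝ) : Fin n → ℝ)) b'
      = (Γ x c a a - Γ' x c a a) + ((Γ x c a b - Γ' x c a b) + (Γ x c b a - Γ' x c b a))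
        + (Γ x c b b - Γ' x c b b) := by
    have h := hexp1
    simp only [one_mul, one_pow] at h
    simp only [Pi.add_apply]
    rw [h, hsa, hsb]
    have hcross' : ∑ a', ∑ b', (Γ x c a' b' - Γ' x c a' b')
        * ((Pi.single a (1:ℝ) : Fin n → ℝ) a' * (Pi.single b (1:ℝ) : Fin n → ℝ) b'
          + (Pi.single b (1:ℝ) : Fin n → ℝ) a' * (Pi.single a (1:ℝ) : Fin n → ℝ) b')
        = (Γ x c a b - Γ' x c a b) + (Γ x c b a - Γ' x c b a) := hcross
    rw [hcross']
  rw [hab'] at hab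
  rw [hsa] at haa
  rw [hsb] at hbb
  have hsym : Γ x c a b - Γ' x c a b = Γ x c b a - Γ' x c b a := by
    rw [hΓsym x c a b, hΓ'sym x c a b]
  have : Γ x c a b - Γ' x c a b = 0 := by linarith [hab, haa, hbb, hsym]
  linarith [this]
end
end

section
/- The two equations δ_θL = 0 and δ_φL = 0 hold at every point of 𝒰 if and only if both of the following hold: (i) δ_wF = 0 at every point of Ω × ℝ² × (0,∞), and (ii) for every (t,r) ∈ Ω, either k₁₁(t,r) = k₁₂(t,r) = 0 or ∂_wF(t,r,ṫ,ṙ,w) = 0 for all (ṫ,ṙ,w) ∈ ℝ² × (0,∞). In particular, if over no point (t,r) the derivative ∂_wF vanishes identically in the velocities, the system δ_θL = 0 = δ_φL is equivalent to δ_wF = 0 together with k₁₁ = k₁₂ = 0 on Ω. -/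
noncomputable section
open Real Set

/-- The base space `(t,r)`. -/
abbrev P2 := ℝ × ℝ
/-- The space of tuples `(t,r,ṫ,ṙ,w)`. -/
abbrev P5 := ℝ × ℝ × ℝ × ℝ × ℝ

/-- `∂f/∂t` -/
def pT (f : P5 → ℝ) (p : P5) : ℝ := fderiv ℝ f p (1, 0, 0, 0, 0)
/-- `∂f/∂r` -/
def pR (f : P5 → ℝ) (p : P5) : ℝ := fderiv ℝ f p (0, 1, 0, 0, 0)
/-- `∂f/∂ṫ` -/
def pTd (f : P5 → ℝ) (p : P5) : ℝ := fderiv ℝ f p (0, 0, 1, 0, 0)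
/-- `∂f/∂ṙ` -/
def pRd (f : P5 → ℝ) (p : P5) : ℝ := fderiv ℝ f p (0, 0, 0, 1, 0)
/-- `∂f/∂w` -/
def pW (f : P5 → ℝ) (p : P5) : ℝ := fderiv ℝ f p (0, 0, 0, 0, 1)

/-- `∂k/∂t` for functions of `(t,r)` only. -/
def dt2 (k : P2 → ℝ) (q : P2) : ℝ := fderiv ℝ k q (1, 0)
/-- `∂k/∂r` for functions of `(t,r)` only. -/
def dr2 (k : P2 → ℝ) (q : P2) : ℝ := fderiv ℝ k q (0, 1)

/-- base point `(t,r)` of `p = (t,r,ṫ,ṙ,w)` -/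
def bp (p : P5) : P2 := (p.1, p.2.1)
/-- the velocity `ṫ` -/
def vT (p : P5) : ℝ := p.2.2.1
/-- the velocity `ṙ` -/
def vR (p : P5) : ℝ := p.2.2.2.1
/-- the velocity `w` -/
def vW (p : P5) : ℝ := p.2.2.2.2

/-- the horizontal derivative `δ_t f` -/
def delT (k : ℕ → P2 → ℝ) (f : P5 → ℝ) (p : P5) : ℝ :=
  pT f p - (k 1 (bp p) * vT p + k 2 (bp p) * vR p) * pTd f p
    - (k 4 (bp p) * vT p + k 6 (bp p) * vR p) * pRd f p
    - k 8 (bp p) * vW p * pW f p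

/-- the horizontal derivative `δ_r f` -/
def delR (k : ℕ → P2 → ℝ) (f : P5 → ℝ) (p : P5) : ℝ :=
  pR f p - (k 2 (bp p) * vT p + k 3 (bp p) * vR p) * pTd f p
    - (k 6 (bp p) * vT p + k 5 (bp p) * vR p) * pRd f p
    - k 9 (bp p) * vW p * pW f p

/-- the operator `δ_w f` -/
def delW (k : ℕ → P2 → ℝ) (f : P5 → ℝ) (p : P5) : ℝ :=
  vW p * k 7 (bp p) * pTd f p + vW p * k 10 (bp p) * pRd f p
    + (k 8 (bp p) * vT p + k 9 (bp p) * vR p) * pW f p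

/-- curvature coefficient `a₁` -/
def a1 (k : ℕ → P2 → ℝ) (q : P2) : ℝ :=
  dr2 (k 1) q - dt2 (k 2) q + k 3 q * k 4 q - k 2 q * k 6 q
/-- curvature coefficient `a₂` -/
def a2 (k : ℕ → P2 → ℝ) (q : P2) : ℝ :=
  dr2 (k 2) q - dt2 (k 3) q + (k 2 q)^2 + k 3 q * k 6 q - k 1 q * k 3 q - k 2 q * k 5 q
/-- curvature coefficient `a₃` -/
def a3 (k : ℕ → P2 → ℝ) (q : P2) : ℝ :=
  dr2 (k 4) q - dt2 (k 6) q + k 1 q * k 6 q + k 4 q * k 5 q - k 2 q * k 4 q - (k 6 q)^2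
/-- curvature coefficient `a₄` -/
def a4 (k : ℕ → P2 → ℝ) (q : P2) : ℝ :=
  dr2 (k 6) q - dt2 (k 5) q + k 2 q * k 6 q - k 3 q * k 4 q
/-- curvature coefficient `a₅` -/
def a5 (k : ℕ → P2 → ℝ) (q : P2) : ℝ := dr2 (k 8) q - dt2 (k 9) q
/-- curvature coefficient `a₆` -/
def a6 (k : ℕ → P2 → ℝ) (q : P2) : ℝ :=
  -dt2 (k 7) q + k 7 q * k 8 q - k 1 q * k 7 q - k 2 q * k 10 q
/-- curvature coefficient `a₇` -/
def a7 (k : ℕ → P2 → ℝ) (q : P2) : ℝ :=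
  -dt2 (k 10) q + k 8 q * k 10 q - k 4 q * k 7 q - k 6 q * k 10 q
/-- curvature coefficient `a₈` -/
def a8 (k : ℕ → P2 → ℝ) (q : P2) : ℝ :=
  -dt2 (k 8) q + k 1 q * k 8 q + k 4 q * k 9 q - (k 8 q)^2
/-- curvature coefficient `a₉` -/
def a9 (k : ℕ → P2 → ℝ) (q : P2) : ℝ :=
  -dt2 (k 9) q + k 2 q * k 8 q + k 6 q * k 9 q - k 8 q * k 9 q
/-- curvature coefficient `a₁₀` -/
def a10 (k : ℕ → P2 → ℝ) (q : P2) : ℝ :=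
  -dr2 (k 7) q + k 7 q * k 9 q - k 2 q * k 7 q - k 3 q * k 10 q
/-- curvature coefficient `a₁₁` -/
def a11 (k : ℕ → P2 → ℝ) (q : P2) : ℝ :=
  -dr2 (k 10) q + k 9 q * k 10 q - k 6 q * k 7 q - k 5 q * k 10 q
/-- curvature coefficient `a₁₂` -/
def a12 (k : ℕ → P2 → ℝ) (q : P2) : ℝ :=
  -dr2 (k 8) q + k 2 q * k 8 q + k 6 q * k 9 q - k 8 q * k 9 q
/-- curvature coefficient `a₁₃` -/
def a13 (k : ℕ → P2 → ℝ) (q : P2) : ℝ :=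
  -dr2 (k 9) q + k 3 q * k 8 q + k 5 q * k 9 q - (k 9 q)^2

/-- `a = k₇/k₁₀` -/
def aa (k : ℕ → P2 → ℝ) (q : P2) : ℝ := k 7 q / k 10 q
/-- `b = k₈/k₁₀` -/
def bb (k : ℕ → P2 → ℝ) (q : P2) : ℝ := k 8 q / k 10 q
/-- `c = (k₉k₁₀ − k₇k₈)/k₁₀²` -/
def cc (k : ℕ → P2 → ℝ) (q : P2) : ℝ := (k 9 q * k 10 q - k 7 q * k 8 q) / (k 10 q)^2

/-- `u = ṫ − a·ṙ` -/
def uV (k : ℕ → P2 → ℝ) (p : P5) : ℝ := vT p - aa k (bp p) * vR p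
/-- `v = c·ṙ² + 2b·ṫ·ṙ − w²` -/
def vV (k : ℕ → P2 → ℝ) (p : P5) : ℝ :=
  cc k (bp p) * (vR p)^2 + 2 * bb k (bp p) * vT p * vR p - (vW p)^2
/-- `z = v/u²` -/
def zV (k : ℕ → P2 → ℝ) (p : P5) : ℝ := vV k p / (uV k p)^2

/-- coefficient `A` -/
def Ac (k : ℕ → P2 → ℝ) (q : P2) : ℝ :=
  bb k q * (aa k q * a1 k q + a2 k q) + (aa k q * bb k q + cc k q) * (aa k q * a3 k q + a4 k q)
    - a5 k q * (2 * aa k q * bb k q + cc k q)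
/-- coefficient `B` -/
def Bc (k : ℕ → P2 → ℝ) (q : P2) : ℝ :=
  aa k q * (aa k q * a3 k q + a4 k q) - (aa k q * a1 k q + a2 k q)
/-- coefficient `C` -/
def Cc (k : ℕ → P2 → ℝ) (q : P2) : ℝ :=
  (aa k q * bb k q + cc k q) * a3 k q + bb k q * (aa k q * a3 k q + a4 k q)
    + bb k q * (a1 k q - 2 * a5 k q)
/-- coefficient `D` -/
def Dc (k : ℕ → P2 → ℝ) (q : P2) : ℝ := aa k q * a3 k q - a1 k q + a5 k q
/-- coefficient `E` -/
def Ec (k : ℕ → P2 → ℝ) (q : P2) : ℝ := bb k q * a3 k q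
/-- coefficient `F` -/
def Fc (k : ℕ → P2 → ℝ) (q : P2) : ℝ := aa k q * a3 k q - a1 k q

/-- `M = 2(k₁ − k₄a)` -/
def Mc (k : ℕ → P2 → ℝ) (q : P2) : ℝ := 2 * (k 1 q - k 4 q * aa k q)
/-- `M̃ = M − 2k₈` -/
def Mtc (k : ℕ → P2 → ℝ) (q : P2) : ℝ := Mc k q - 2 * k 8 q
/-- `N = 2(k₂ − k₆a)` -/
def Nc (k : ℕ → P2 → ℝ) (q : P2) : ℝ := 2 * (k 2 q - k 6 q * aa k q)
/-- `Ñ = N − 2k₉` -/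
def Ntc (k : ℕ → P2 → ℝ) (q : P2) : ℝ := Nc k q - 2 * k 9 q

/-- iterated bracket coefficient `A₁` -/
def A1 (k : ℕ → P2 → ℝ) (q : P2) : ℝ := dt2 (a1 k) q + a3 k q * k 2 q - a2 k q * k 4 q
/-- iterated bracket coefficient `A₂` -/
def A2 (k : ℕ → P2 → ℝ) (q : P2) : ℝ :=
  dt2 (a2 k) q + a2 k q * k 1 q - a1 k q * k 2 q + a4 k q * k 2 q - a2 k q * k 6 q
/-- iterated bracket coefficient `A₃` -/
def A3 (k : ℕ → P2 → ℝ) (q : P2) : ℝ :=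
  dt2 (a3 k) q - a3 k q * k 1 q + a1 k q * k 4 q - a4 k q * k 4 q + a3 k q * k 6 q
/-- iterated bracket coefficient `A₄` -/
def A4 (k : ℕ → P2 → ℝ) (q : P2) : ℝ := dt2 (a4 k) q + a2 k q * k 4 q - a3 k q * k 2 q
/-- iterated bracket coefficient `A₅` -/
def A5 (k : ℕ → P2 → ℝ) (q : P2) : ℝ := dt2 (a5 k) q
/-- iterated bracket coefficient `B₁` -/
def B1 (k : ℕ → P2 → ℝ) (q : P2) : ℝ := dr2 (a1 k) q + a3 k q * k 3 q - a2 k q * k 6 q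
/-- iterated bracket coefficient `B₂` -/
def B2 (k : ℕ → P2 → ℝ) (q : P2) : ℝ :=
  dr2 (a2 k) q + a2 k q * k 2 q - a1 k q * k 3 q + a4 k q * k 3 q - a2 k q * k 5 q
/-- iterated bracket coefficient `B₃` -/
def B3 (k : ℕ → P2 → ℝ) (q : P2) : ℝ :=
  dr2 (a3 k) q - a3 k q * k 2 q + a1 k q * k 6 q - a4 k q * k 6 q + a3 k q * k 5 q
/-- iterated bracket coefficient `B₄` -/
def B4 (k : ℕ → P2 → ℝ) (q : P2) : ℝ := dr2 (a4 k) q + a2 k q * k 6 q - a3 k q * k 3 q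
/-- iterated bracket coefficient `B₅` -/
def B5 (k : ℕ → P2 → ℝ) (q : P2) : ℝ := dr2 (a5 k) q

/-- the domain `Ω × ℝ² × (0,∞)` -/
def D5 (Ω : Set P2) : Set P5 := {p | bp p ∈ Ω ∧ 0 < vW p}

/-- the set `S(t,r,z₀)` of velocities -/
def Sset (k : ℕ → P2 → ℝ) (q : P2) (z0 : ℝ) : Set (ℝ × ℝ) :=
  {v | v.1 - aa k q * v.2 > 0 ∧
    cc k q * v.2^2 + 2 * bb k q * v.1 * v.2 - z0 * (v.1 - aa k q * v.2)^2 > 0}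

/-- `∂Ξ/∂t` for functions of `(t,r,z)` -/
def dT3 (f : ℝ × ℝ × ℝ → ℝ) (s : ℝ × ℝ × ℝ) : ℝ := fderiv ℝ f s (1, 0, 0)
/-- `∂Ξ/∂r` for functions of `(t,r,z)` -/
def dR3 (f : ℝ × ℝ × ℝ → ℝ) (s : ℝ × ℝ × ℝ) : ℝ := fderiv ℝ f s (0, 1, 0)
/-- `∂Ξ/∂z` for functions of `(t,r,z)` -/
def dZ3 (f : ℝ × ℝ × ℝ → ℝ) (s : ℝ × ℝ × ℝ) : ℝ := fderiv ℝ f s (0, 0, 1)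

/-- the domain `Ω × I ⊆ ℝ³` -/
def OI (Ω : Set P2) (I : Set ℝ) : Set (ℝ × ℝ × ℝ) := {s | (s.1, s.2.1) ∈ Ω ∧ s.2.2 ∈ I}

/-- Points `(t,r,θ,φ,ṫ,ṙ,θ̇,φ̇)` of the tangent bundle in spherical coordinates. -/
abbrev P8 := ℝ × ℝ × ℝ × ℝ × ℝ × ℝ × ℝ × ℝ

/-- the coordinate `θ` -/
def cθ (p : P8) : ℝ := p.2.2.1
/-- the coordinate `φ` -/
def cφ (p : P8) : ℝ := p.2.2.2.1
/-- the velocity `ṫ` -/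
def cTd8 (p : P8) : ℝ := p.2.2.2.2.1
/-- the velocity `ṙ` -/
def cRd8 (p : P8) : ℝ := p.2.2.2.2.2.1
/-- the velocity `θ̇` -/
def cθd (p : P8) : ℝ := p.2.2.2.2.2.2.1
/-- the velocity `φ̇` -/
def cφd (p : P8) : ℝ := p.2.2.2.2.2.2.2

/-- `∂f/∂θ` -/
def pθ (f : P8 → ℝ) (p : P8) : ℝ := fderiv ℝ f p (0, 0, 1, 0, 0, 0, 0, 0)
/-- `∂f/∂φ` -/
def pφ (f : P8 → ℝ) (p : P8) : ℝ := fderiv ℝ f p (0, 0, 0, 1, 0, 0, 0, 0)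
/-- `∂f/∂ṫ` -/
def pTd8 (f : P8 → ℝ) (p : P8) : ℝ := fderiv ℝ f p (0, 0, 0, 0, 1, 0, 0, 0)
/-- `∂f/∂ṙ` -/
def pRd8 (f : P8 → ℝ) (p : P8) : ℝ := fderiv ℝ f p (0, 0, 0, 0, 0, 1, 0, 0)
/-- `∂f/∂θ̇` -/
def pθd (f : P8 → ℝ) (p : P8) : ℝ := fderiv ℝ f p (0, 0, 0, 0, 0, 0, 1, 0)
/-- `∂f/∂φ̇` -/
def pφd (f : P8 → ℝ) (p : P8) : ℝ := fderiv ℝ f p (0, 0, 0, 0, 0, 0, 0, 1)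

/-- The domain `𝒰 = Ω × (0,π) × ℝ × ℝ² × (ℝ² ∖ {(0,0)})`. -/
def U8 (Ω : Set (ℝ × ℝ)) : Set P8 :=
  {p | (p.1, p.2.1) ∈ Ω ∧ 0 < cθ p ∧ cθ p < Real.pi ∧ (cθd p, cφd p) ≠ (0, 0)}

/-- The spherically symmetric Lagrangian `L(t,r,θ,φ,ṫ,ṙ,θ̇,φ̇) = F(t,r,ṫ,ṙ,w)`,
`w = √(θ̇² + sin²θ·φ̇²)`. -/
def sphL (F : P5 → ℝ) (p : P8) : ℝ :=
  F (p.1, p.2.1, cTd8 p, cRd8 p,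
    Real.sqrt ((cθd p)^2 + (Real.sin (cθ p))^2 * (cφd p)^2))

/-- The operator `δ_θ`. -/
def delθ (k : ℕ → P2 → ℝ) (f : P8 → ℝ) (p : P8) : ℝ :=
  pθ f p - k 7 (p.1, p.2.1) * cθd p * pTd8 f p - k 10 (p.1, p.2.1) * cθd p * pRd8 f p
    - (k 8 (p.1, p.2.1) * cTd8 p + k 9 (p.1, p.2.1) * cRd8 p) * pθd f p
    - ((k 11 (p.1, p.2.1) * cTd8 p + k 12 (p.1, p.2.1) * cRd8 p) / sin (cθ p)
        + cφd p * (cos (cθ p) / sin (cθ p))) * pφd f p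

/-- The operator `δ_φ`. -/
def delφ (k : ℕ → P2 → ℝ) (f : P8 → ℝ) (p : P8) : ℝ :=
  pφ f p - k 7 (p.1, p.2.1) * cφd p * (sin (cθ p))^2 * pTd8 f p
    - k 10 (p.1, p.2.1) * cφd p * (sin (cθ p))^2 * pRd8 f p
    + (k 11 (p.1, p.2.1) * cTd8 p + k 12 (p.1, p.2.1) * cRd8 p + cφd p * cos (cθ p))
        * sin (cθ p) * pθd f p
    - (k 8 (p.1, p.2.1) * cTd8 p + k 9 (p.1, p.2.1) * cRd8 p
        + cθd p * (cos (cθ p) / sin (cθ p))) * pφd f p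

/-- inner radicand -/
def hFun (p : P8) : ℝ := (cθd p)^2 + (Real.sin (cθ p))^2 * (cφd p)^2

/-- the w function -/
def wFun (p : P8) : ℝ := Real.sqrt (hFun p)

/-- the reduction map -/
def G8 (p : P8) : P5 := (p.1, p.2.1, cTd8 p, cRd8 p, wFun p)

lemma sphL_eq (F : P5 → ℝ) : sphL F = fun p => F (G8 p) := rfl

lemma hFun_pos {p : P8} (h0 : 0 < cθ p) (hπ : cθ p < Real.pi)
    (hne : (cθd p, cφd p) ≠ (0, 0)) : 0 < hFun p := by
  have hs : 0 < Real.sin (cθ p) := Real.sin_pos_of_pos_of_lt_pi h0 hπ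
  rcases eq_or_ne (cθd p) 0 with h1 | h1
  · have h2 : cφd p ≠ 0 := by
      intro h2; exact hne (by simp [h1, h2])
    have h3 : 0 < (Real.sin (cθ p))^2 * (cφd p)^2 := by positivity
    simp only [hFun, h1]; nlinarith
  · have h3 : 0 < (cθd p)^2 := by positivity
    have h2 : 0 ≤ (Real.sin (cθ p))^2 * (cφd p)^2 := by positivity
    simp only [hFun]; nlinarith

lemma wFun_pos {p : P8} (h0 : 0 < cθ p) (hπ : cθ p < Real.pi)
    (hne : (cθd p, cφd p) ≠ (0, 0)) : 0 < wFun p :=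
  Real.sqrt_pos.mpr (hFun_pos h0 hπ hne)

lemma sq_wFun {p : P8} (h0 : 0 < cθ p) (hπ : cθ p < Real.pi)
    (hne : (cθd p, cφd p) ≠ (0, 0)) : (wFun p)^2 = hFun p :=
  Real.sq_sqrt (hFun_pos h0 hπ hne).le
set_option maxRecDepth 4000 in
lemma fderiv_sphL_apply (F : P5 → ℝ) (p : P8)
    (h0 : 0 < cθ p) (hπ : cθ p < Real.pi) (hne : (cθd p, cφd p) ≠ (0, 0))
    (hFd : DifferentiableAt ℝ F (G8 p)) (v : P8) :
    fderiv ℝ (sphL F) p v = fderiv ℝ F (G8 p)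
      (v.1, v.2.1, v.2.2.2.2.1, v.2.2.2.2.2.1,
        (cθd p * v.2.2.2.2.2.2.1 + Real.sin (cθ p) * Real.cos (cθ p) * (cφd p)^2 * v.2.2.1
          + (Real.sin (cθ p))^2 * cφd p * v.2.2.2.2.2.2.2) / wFun p) := by
  have hwne : wFun p ≠ 0 := (wFun_pos h0 hπ hne).ne'
  have hhne : hFun p ≠ 0 := (hFun_pos h0 hπ hne).ne'
  have hid : HasFDerivAt _ (ContinuousLinearMap.id ℝ P8) p := hasFDerivAt_id p
  have hθ := hid.snd.snd.fst
  have hθd := hid.snd.snd.snd.snd.snd.snd.fst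
  have hφd := hid.snd.snd.snd.snd.snd.snd.snd
  have hsin := (Real.hasDerivAt_sin (p.2.2.1)).comp_hasFDerivAt p hθ
  have hinner := (hθd.mul hθd).add ((hsin.mul hsin).mul (hφd.mul hφd))
  have hinner' : HasFDerivAt hFun _ p :=
    hinner.congr_of_eventuallyEq (Filter.Eventually.of_forall fun q => by
      show hFun q = _
      simp only [hFun, cθd, cθ, cφd, Function.comp_apply, id_eq, Pi.add_apply, Pi.mul_apply, Pi.pow_apply]
      ring)
  have hw := (Real.hasDerivAt_sqrt hhne).comp_hasFDerivAt p hinner'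
  have hG : HasFDerivAt G8 _ p :=
    HasFDerivAt.prodMk (hid.fst) (HasFDerivAt.prodMk (hid.snd.fst) (HasFDerivAt.prodMk (hid.snd.snd.snd.snd.fst)
      (HasFDerivAt.prodMk (hid.snd.snd.snd.snd.snd.fst) hw)))
  have hC := hFd.hasFDerivAt.comp p hG
  have hfd : fderiv ℝ (sphL F) p = _ := hC.fderiv
  rw [hfd]
  simp only [ContinuousLinearMap.coe_comp', Function.comp_apply,
    ContinuousLinearMap.prod_apply, ContinuousLinearMap.smul_apply,
    ContinuousLinearMap.add_apply, ContinuousLinearMap.coe_fst',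
    ContinuousLinearMap.coe_snd', ContinuousLinearMap.mul_apply',
    ContinuousLinearMap.coe_id', id_eq, smul_eq_mul,
    ContinuousLinearMap.coe_smul', Pi.smul_apply]
  congr 1
  simp only [Prod.mk.injEq, and_true, true_and, eq_self_iff_true]
  rw [show Real.sqrt (hFun p) = wFun p from rfl]
  simp only [cθd, cθ, cφd, Pi.mul_apply, Function.comp_apply]
  field_simp
  ring
lemma decomp5 (L : P5 →L[ℝ] ℝ) (a b x : ℝ) :
    L (0, 0, a, b, x) = a * L (0, 0, 1, 0, 0) + b * L (0, 0, 0, 1, 0) + x * L (0, 0, 0, 0, 1) := by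
  have hv : ((0, 0, a, b, x) : P5) = a • ((0:ℝ), (0:ℝ), (1:ℝ), (0:ℝ), (0:ℝ))
      + b • ((0:ℝ), (0:ℝ), (0:ℝ), (1:ℝ), (0:ℝ)) + x • ((0:ℝ), (0:ℝ), (0:ℝ), (0:ℝ), (1:ℝ)) := by
    simp [Prod.ext_iff]
  rw [hv, map_add, map_add, map_smul, map_smul, map_smul, smul_eq_mul, smul_eq_mul, smul_eq_mul]

section six
variable (F : P5 → ℝ) (p : P8)

lemma eθ' (h0 : 0 < cθ p) (hπ : cθ p < Real.pi) (hne : (cθd p, cφd p) ≠ (0, 0))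
    (hFd : DifferentiableAt ℝ F (G8 p)) :
    pθ (sphL F) p = Real.sin (cθ p) * Real.cos (cθ p) * (cφd p)^2 / wFun p * pW F (G8 p) := by
  have E := fderiv_sphL_apply F p h0 hπ hne hFd (0, 0, 1, 0, 0, 0, 0, 0)
  rw [pθ, E]; norm_num; rw [decomp5, pW]; ring

lemma eφ' (h0 : 0 < cθ p) (hπ : cθ p < Real.pi) (hne : (cθd p, cφd p) ≠ (0, 0))
    (hFd : DifferentiableAt ℝ F (G8 p)) :
    pφ (sphL F) p = 0 := by
  have E := fderiv_sphL_apply F p h0 hπ hne hFd (0, 0, 0, 1, 0, 0, 0, 0)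
  rw [pφ, E]; norm_num; exact (fderiv ℝ F (G8 p)).map_zero

lemma eTd' (h0 : 0 < cθ p) (hπ : cθ p < Real.pi) (hne : (cθd p, cφd p) ≠ (0, 0))
    (hFd : DifferentiableAt ℝ F (G8 p)) :
    pTd8 (sphL F) p = pTd F (G8 p) := by
  have E := fderiv_sphL_apply F p h0 hπ hne hFd (0, 0, 0, 0, 1, 0, 0, 0)
  rw [pTd8, E, pTd]; norm_num

lemma eRd' (h0 : 0 < cθ p) (hπ : cθ p < Real.pi) (hne : (cθd p, cφd p) ≠ (0, 0))
    (hFd : DifferentiableAt ℝ F (G8 p)) :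
    pRd8 (sphL F) p = pRd F (G8 p) := by
  have E := fderiv_sphL_apply F p h0 hπ hne hFd (0, 0, 0, 0, 0, 1, 0, 0)
  rw [pRd8, E, pRd]; norm_num

lemma eθd' (h0 : 0 < cθ p) (hπ : cθ p < Real.pi) (hne : (cθd p, cφd p) ≠ (0, 0))
    (hFd : DifferentiableAt ℝ F (G8 p)) :
    pθd (sphL F) p = cθd p / wFun p * pW F (G8 p) := by
  have E := fderiv_sphL_apply F p h0 hπ hne hFd (0, 0, 0, 0, 0, 0, 1, 0)
  rw [pθd, E]; norm_num; rw [decomp5, pW]; ring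

lemma eφd' (h0 : 0 < cθ p) (hπ : cθ p < Real.pi) (hne : (cθd p, cφd p) ≠ (0, 0))
    (hFd : DifferentiableAt ℝ F (G8 p)) :
    pφd (sphL F) p = (Real.sin (cθ p))^2 * cφd p / wFun p * pW F (G8 p) := by
  have E := fderiv_sphL_apply F p h0 hπ hne hFd (0, 0, 0, 0, 0, 0, 0, 1)
  rw [pφd, E]; norm_num; rw [decomp5, pW]; ring

end six

lemma delθ_formula (k : ℕ → P2 → ℝ) (F : P5 → ℝ) (p : P8)
    (h0 : 0 < cθ p) (hπ : cθ p < Real.pi) (hne : (cθd p, cφd p) ≠ (0, 0))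
    (hFd : DifferentiableAt ℝ F (G8 p)) :
    delθ k (sphL F) p = -(cθd p / wFun p) * delW k F (G8 p)
      - (k 11 (p.1, p.2.1) * cTd8 p + k 12 (p.1, p.2.1) * cRd8 p)
          * Real.sin (cθ p) * cφd p / wFun p * pW F (G8 p) := by
  have hs : Real.sin (cθ p) ≠ 0 := (Real.sin_pos_of_pos_of_lt_pi h0 hπ).ne'
  have hw : wFun p ≠ 0 := (wFun_pos h0 hπ hne).ne'
  rw [delθ, eθ' F p h0 hπ hne hFd, eφd' F p h0 hπ hne hFd, eθd' F p h0 hπ hne hFd,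
    eTd' F p h0 hπ hne hFd, eRd' F p h0 hπ hne hFd]
  rw [delW]
  have hbp : bp (G8 p) = (p.1, p.2.1) := rfl
  have hvT : vT (G8 p) = cTd8 p := rfl
  have hvR : vR (G8 p) = cRd8 p := rfl
  have hvW : vW (G8 p) = wFun p := rfl
  rw [hbp, hvT, hvR, hvW]
  field_simp
  ring

lemma delφ_formula (k : ℕ → P2 → ℝ) (F : P5 → ℝ) (p : P8)
    (h0 : 0 < cθ p) (hπ : cθ p < Real.pi) (hne : (cθd p, cφd p) ≠ (0, 0))
    (hFd : DifferentiableAt ℝ F (G8 p)) :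
    delφ k (sphL F) p = -(cφd p * (Real.sin (cθ p))^2 / wFun p) * delW k F (G8 p)
      + (k 11 (p.1, p.2.1) * cTd8 p + k 12 (p.1, p.2.1) * cRd8 p)
          * Real.sin (cθ p) * cθd p / wFun p * pW F (G8 p) := by
  have hs : Real.sin (cθ p) ≠ 0 := (Real.sin_pos_of_pos_of_lt_pi h0 hπ).ne'
  have hw : wFun p ≠ 0 := (wFun_pos h0 hπ hne).ne'
  rw [delφ, eφ' F p h0 hπ hne hFd, eφd' F p h0 hπ hne hFd, eθd' F p h0 hπ hne hFd,
    eTd' F p h0 hπ hne hFd, eRd' F p h0 hπ hne hFd]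
  rw [delW]
  have hbp : bp (G8 p) = (p.1, p.2.1) := rfl
  have hvT : vT (G8 p) = cTd8 p := rfl
  have hvR : vR (G8 p) = cRd8 p := rfl
  have hvW : vW (G8 p) = wFun p := rfl
  rw [hbp, hvT, hvR, hvW]
  field_simp
  ring

lemma isOpen_D5 {Ω : Set P2} (hΩ : IsOpen Ω) : IsOpen (D5 Ω) := by
  have h : D5 Ω = (fun p : P5 => (p.1, p.2.1)) ⁻¹' Ω ∩ (fun p : P5 => p.2.2.2.2) ⁻¹' (Set.Ioi 0) := rfl
  rw [h]
  exact (hΩ.preimage (by fun_prop)).inter (isOpen_Ioi.preimage (by fun_prop))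

lemma G8_mem_D5 {Ω : Set P2} {p : P8} (hp : p ∈ U8 Ω) : G8 p ∈ D5 Ω :=
  ⟨hp.1, wFun_pos hp.2.1 hp.2.2.1 hp.2.2.2⟩
lemma pW_continuousOn {Ω : Set P2} (hΩ : IsOpen Ω) (F : P5 → ℝ)
    (hF : ContDiffOn ℝ (⊤ : ℕ∞) F (D5 Ω)) : ContinuousOn (pW F) (D5 Ω) := by
  have h1 : ContinuousOn (fderiv ℝ F) (D5 Ω) :=
    hF.continuousOn_fderiv_of_isOpen (isOpen_D5 hΩ) (by simp)
  exact (ContinuousLinearMap.apply ℝ ℝ ((0, 0, 0, 0, 1) : P5)).continuous.comp_continuousOn h1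

lemma punctured_limit {f : ℝ → ℝ} (hc : ContinuousAt f 0)
    (hx : ∀ ε : ℝ, ε ≠ 0 → f ε = 0) : f 0 = 0 := by
  have h1 : Filter.Tendsto f (nhdsWithin (0:ℝ) {(0:ℝ)}ᶜ) (nhds (f 0)) :=
    hc.tendsto.mono_left nhdsWithin_le_nhds
  have h2 : Filter.Tendsto f (nhdsWithin (0:ℝ) {(0:ℝ)}ᶜ) (nhds 0) := by
    refine Filter.Tendsto.congr' ?_ tendsto_const_nhds
    filter_upwards [self_mem_nhdsWithin] with ε hε using (hx ε hε).symm
  exact tendsto_nhds_unique h1 h2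
lemma diff_of_mem {Ω : Set P2} (hΩ : IsOpen Ω) {F : P5 → ℝ}
    (hF : ContDiffOn ℝ (⊤ : ℕ∞) F (D5 Ω)) {q : P5} (hq : q ∈ D5 Ω) : DifferentiableAt ℝ F q :=
  (hF.differentiableOn (by simp)).differentiableAt ((isOpen_D5 hΩ).mem_nhds hq)

lemma keyA {Ω : Set P2} (hΩ : IsOpen Ω) (k : ℕ → P2 → ℝ) (F : P5 → ℝ)
    (hF : ContDiffOn ℝ (⊤ : ℕ∞) F (D5 Ω))
    (h : ∀ p ∈ U8 Ω, delθ k (sphL F) p = 0 ∧ delφ k (sphL F) p = 0) :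
    ∀ q ∈ D5 Ω, delW k F q = 0 := by
  rintro ⟨t, r, td, rd, w⟩ ⟨hq, hw⟩
  have hw : (0:ℝ) < w := hw
  have hpU : ((t, r, Real.pi/2, 0, td, rd, w, 0) : P8) ∈ U8 Ω := by
    refine ⟨hq, ?_, ?_, ?_⟩
    · show (0:ℝ) < Real.pi/2; positivity
    · show Real.pi/2 < Real.pi; linarith [Real.pi_pos]
    · show ((w, (0:ℝ))) ≠ (0, 0); simp [hw.ne']
  have hwf : wFun (t, r, Real.pi/2, 0, td, rd, w, 0) = w := by
    simp [wFun, hFun, cθd, cθ, cφd, Real.sqrt_sq hw.le]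
  have hG8 : G8 (t, r, Real.pi/2, 0, td, rd, w, 0) = (t, r, td, rd, w) := by
    simp [G8, cTd8, cRd8, hwf]
  have hFd : DifferentiableAt ℝ F (G8 (t, r, Real.pi/2, 0, td, rd, w, 0)) :=
    hG8 ▸ diff_of_mem hΩ hF ⟨hq, hw⟩
  have h1 := (h _ hpU).1
  rw [delθ_formula k F _ hpU.2.1 hpU.2.2.1 hpU.2.2.2 hFd, hG8, hwf] at h1
  simp only [cθ, cθd, cφd, cTd8, cRd8] at h1
  simp only [div_self hw.ne', mul_zero, zero_div, zero_mul, sub_zero, neg_mul, one_mul,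
    neg_eq_zero, mul_comm] at h1
  exact h1

lemma keyB {Ω : Set P2} (hΩ : IsOpen Ω) (k : ℕ → P2 → ℝ) (F : P5 → ℝ)
    (hF : ContDiffOn ℝ (⊤ : ℕ∞) F (D5 Ω))
    (h : ∀ p ∈ U8 Ω, delθ k (sphL F) p = 0 ∧ delφ k (sphL F) p = 0) :
    ∀ q ∈ Ω, ∀ td rd w : ℝ, 0 < w →
      (k 11 q * td + k 12 q * rd) * pW F (q.1, q.2, td, rd, w) = 0 := by
  rintro ⟨t, r⟩ hq td rd w hw
  have hpU : ((t, r, Real.pi/2, 0, td, rd, 0, w) : P8) ∈ U8 Ω := by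
    refine ⟨hq, ?_, ?_, ?_⟩
    · show (0:ℝ) < Real.pi/2; positivity
    · show Real.pi/2 < Real.pi; linarith [Real.pi_pos]
    · show (((0:ℝ), w)) ≠ (0, 0); simp [hw.ne']
  have hwf : wFun (t, r, Real.pi/2, 0, td, rd, 0, w) = w := by
    simp [wFun, hFun, cθd, cθ, cφd, Real.sin_pi_div_two, Real.sqrt_sq hw.le]
  have hG8 : G8 (t, r, Real.pi/2, 0, td, rd, 0, w) = (t, r, td, rd, w) := by
    simp [G8, cTd8, cRd8, hwf]
  have hFd : DifferentiableAt ℝ F (G8 (t, r, Real.pi/2, 0, td, rd, 0, w)) :=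
    hG8 ▸ diff_of_mem hΩ hF ⟨hq, hw⟩
  have h1 := (h _ hpU).1
  rw [delθ_formula k F _ hpU.2.1 hpU.2.2.1 hpU.2.2.2 hFd, hG8, hwf] at h1
  simp only [cθ, cθd, cφd, cTd8, cRd8] at h1
  simp only [Real.sin_pi_div_two, mul_one, zero_div, neg_zero, zero_mul, zero_sub,
    neg_eq_zero] at h1
  have h2 : (k 11 (t, r) * td + k 12 (t, r) * rd) * w / w * pW F (t, r, td, rd, w) = 0 := by
    rw [show (k 11 (t, r) * td + k 12 (t, r) * rd) * w / w
        = (k 11 (t, r) * td + k 12 (t, r) * rd) * 1 * w / w by ring] at h1 ⊢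
    · exact h1
  rw [mul_div_assoc, div_self hw.ne', mul_one] at h2
  exact h2

theorem stmt4' (Ω : Set P2) (hΩopen : IsOpen Ω) (hΩne : Ω.Nonempty)
    (k : ℕ → P2 → ℝ) (hk : ∀ i, ContDiffOn ℝ (⊤ : ℕ∞) (k i) Ω)
    (F : P5 → ℝ) (hF : ContDiffOn ℝ (⊤ : ℕ∞) F (D5 Ω)) :
    ((∀ p ∈ U8 Ω, delθ k (sphL F) p = 0 ∧ delφ k (sphL F) p = 0) ↔
      ((∀ q ∈ D5 Ω, delW k F q = 0) ∧
        ∀ q ∈ Ω, (k 11 q = 0 ∧ k 12 q = 0) ∨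
          (∀ td rd w : ℝ, 0 < w → pW F (q.1, q.2, td, rd, w) = 0))) ∧
    ((∀ q ∈ Ω, ¬ (∀ td rd w : ℝ, 0 < w → pW F (q.1, q.2, td, rd, w) = 0)) →
      ((∀ p ∈ U8 Ω, delθ k (sphL F) p = 0 ∧ delφ k (sphL F) p = 0) ↔
        ((∀ q ∈ D5 Ω, delW k F q = 0) ∧ ∀ q ∈ Ω, k 11 q = 0 ∧ k 12 q = 0))) := by
  have main : (∀ p ∈ U8 Ω, delθ k (sphL F) p = 0 ∧ delφ k (sphL F) p = 0) ↔
      ((∀ q ∈ D5 Ω, delW k F q = 0) ∧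
        ∀ q ∈ Ω, (k 11 q = 0 ∧ k 12 q = 0) ∨
          (∀ td rd w : ℝ, 0 < w → pW F (q.1, q.2, td, rd, w) = 0)) := by
    constructor
    · intro h
      refine ⟨keyA hΩopen k F hF h, ?_⟩
      intro q hq
      by_cases hk1112 : k 11 q = 0 ∧ k 12 q = 0
      · exact Or.inl hk1112
      right
      intro td rd w hw
      have hKey := keyB hΩopen k F hF h q hq
      rcases not_and_or.mp hk1112 with h11 | h12
      · by_cases hK : k 11 q * td + k 12 q * rd = 0
        · have hx : ∀ ε : ℝ, ε ≠ 0 → pW F (q.1, q.2, td + ε, rd, w) = 0 := by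
            intro ε hε
            have hh := hKey (td + ε) rd w hw
            rw [show k 11 q * (td + ε) + k 12 q * rd = k 11 q * ε by
              rw [mul_add]; linarith [hK]] at hh
            exact (mul_eq_zero.mp hh).resolve_left (mul_ne_zero h11 hε)
          have hc : ContinuousAt (fun ε : ℝ => pW F (q.1, q.2, td + ε, rd, w)) 0 := by
            have hmem : ((q.1, q.2, td + 0, rd, w) : P5) ∈ D5 Ω := ⟨hq, hw⟩
            have hcp : ContinuousAt (pW F) ((q.1, q.2, td + 0, rd, w) : P5) :=
              (pW_continuousOn hΩopen F hF).continuousAt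
                ((isOpen_D5 hΩopen).mem_nhds hmem)
            have hin : ContinuousAt (fun ε : ℝ => ((q.1, q.2, td + ε, rd, w) : P5)) 0 := by
              fun_prop
            exact ContinuousAt.comp (g := pW F)
              (f := fun ε : ℝ => ((q.1, q.2, td + ε, rd, w) : P5)) hcp hin
          have := punctured_limit hc hx
          simpa using this
        · exact (mul_eq_zero.mp (hKey td rd w hw)).resolve_left hK
      · by_cases hK : k 11 q * td + k 12 q * rd = 0
        · have hx : ∀ ε : ℝ, ε ≠ 0 → pW F (q.1, q.2, td, rd + ε, w) = 0 := by
            intro ε hε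
            have hh := hKey td (rd + ε) w hw
            rw [show k 11 q * td + k 12 q * (rd + ε) = k 12 q * ε by
              rw [mul_add]; linarith [hK]] at hh
            exact (mul_eq_zero.mp hh).resolve_left (mul_ne_zero h12 hε)
          have hc : ContinuousAt (fun ε : ℝ => pW F (q.1, q.2, td, rd + ε, w)) 0 := by
            have hmem : ((q.1, q.2, td, rd + 0, w) : P5) ∈ D5 Ω := ⟨hq, hw⟩
            have hcp : ContinuousAt (pW F) ((q.1, q.2, td, rd + 0, w) : P5) :=
              (pW_continuousOn hΩopen F hF).continuousAt
                ((isOpen_D5 hΩopen).mem_nhds hmem)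
            have hin : ContinuousAt (fun ε : ℝ => ((q.1, q.2, td, rd + ε, w) : P5)) 0 := by
              fun_prop
            exact ContinuousAt.comp (g := pW F)
              (f := fun ε : ℝ => ((q.1, q.2, td, rd + ε, w) : P5)) hcp hin
          have := punctured_limit hc hx
          simpa using this
        · exact (mul_eq_zero.mp (hKey td rd w hw)).resolve_left hK
    · rintro ⟨h1, h2⟩ p hp
      obtain ⟨hq, h0, hπ, hne⟩ := hp
      have hpU : p ∈ U8 Ω := ⟨hq, h0, hπ, hne⟩
      have hmem := G8_mem_D5 hpU
      have hFd : DifferentiableAt ℝ F (G8 p) := diff_of_mem hΩopen hF hmem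
      have hδ : delW k F (G8 p) = 0 := h1 _ hmem
      have hpW : (k 11 (p.1, p.2.1) * cTd8 p + k 12 (p.1, p.2.1) * cRd8 p) * pW F (G8 p) = 0 := by
        rcases h2 (p.1, p.2.1) hq with ⟨h11, h12⟩ | hpw
        · rw [h11, h12]; ring
        · have := hpw (cTd8 p) (cRd8 p) (wFun p) (wFun_pos h0 hπ hne)
          rw [show ((((p.1, p.2.1) : P2).1, ((p.1, p.2.1) : P2).2, cTd8 p, cRd8 p, wFun p) : P5)
              = G8 p from rfl] at this
          rw [this]; ring
      constructor
      · rw [delθ_formula k F p h0 hπ hne hFd, hδ]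
        rw [show (k 11 (p.1, p.2.1) * cTd8 p + k 12 (p.1, p.2.1) * cRd8 p)
            * Real.sin (cθ p) * cφd p / wFun p * pW F (G8 p)
            = (k 11 (p.1, p.2.1) * cTd8 p + k 12 (p.1, p.2.1) * cRd8 p) * pW F (G8 p)
              * (Real.sin (cθ p) * cφd p / wFun p) by ring, hpW]
        ring
      · rw [delφ_formula k F p h0 hπ hne hFd, hδ]
        rw [show (k 11 (p.1, p.2.1) * cTd8 p + k 12 (p.1, p.2.1) * cRd8 p)
            * Real.sin (cθ p) * cθd p / wFun p * pW F (G8 p)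
            = (k 11 (p.1, p.2.1) * cTd8 p + k 12 (p.1, p.2.1) * cRd8 p) * pW F (G8 p)
              * (Real.sin (cθ p) * cθd p / wFun p) by ring, hpW]
        ring
  refine ⟨main, fun H => ?_⟩
  rw [main]
  constructor
  · rintro ⟨h1, h2⟩
    exact ⟨h1, fun q hq => (h2 q hq).resolve_right (H q hq)⟩
  · rintro ⟨h1, h2⟩
    exact ⟨h1, fun q hq => Or.inl (h2 q hq)⟩

/-- The equations `δ_θ L = 0 = δ_φ L` are equivalent to `δ_w F = 0` together
with `k₁₁ = k₁₂ = 0` (unless `∂_w F` vanishes identically in the velocities over some point). -/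
theorem stmt4 (Ω : Set P2) (hΩopen : IsOpen Ω) (hΩne : Ω.Nonempty)
    (k : ℕ → P2 → ℝ) (hk : ∀ i, ContDiffOn ℝ (⊤ : ℕ∞) (k i) Ω)
    (F : P5 → ℝ) (hF : ContDiffOn ℝ (⊤ : ℕ∞) F (D5 Ω)) :
    ((∀ p ∈ U8 Ω, delθ k (sphL F) p = 0 ∧ delφ k (sphL F) p = 0) ↔
      ((∀ q ∈ D5 Ω, delW k F q = 0) ∧
        ∀ q ∈ Ω, (k 11 q = 0 ∧ k 12 q = 0) ∨
          (∀ td rd w : ℝ, 0 < w → pW F (q.1, q.2, td, rd, w) = 0))) ∧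
    ((∀ q ∈ Ω, ¬ (∀ td rd w : ℝ, 0 < w → pW F (q.1, q.2, td, rd, w) = 0)) →
      ((∀ p ∈ U8 Ω, delθ k (sphL F) p = 0 ∧ delφ k (sphL F) p = 0) ↔
        ((∀ q ∈ D5 Ω, delW k F q = 0) ∧ ∀ q ∈ Ω, k 11 q = 0 ∧ k 12 q = 0))) := by
  exact stmt4' Ω hΩopen hΩne k hk F hF
end
end

section
/- For every smooth function f on Ω × ℝ² × (0,∞), the commutator of the operators δ_t and δ_r is given by δ_t(δ_r f) − δ_r(δ_t f) = (a₁ṫ + a₂ṙ)∂_ṫ f + (a₃ṫ + a₄ṙ)∂_ṙ f + a₅·w·∂_w f at every point of Ω × ℝ² × (0,∞). In particular the Lie bracket [δ_t, δ_r] is the vertical vector field (a₁ṫ+a₂ṙ)∂_ṫ + (a₃ṫ+a₄ṙ)∂_ṙ + a₅w∂_w. -/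
noncomputable section
open Real Set

namespace Stmt5Aux

/-- `bp` as a continuous linear map. -/
def bpL : P5 →L[ℝ] P2 :=
  (ContinuousLinearMap.fst ℝ ℝ (ℝ × ℝ × ℝ × ℝ)).prod
    ((ContinuousLinearMap.fst ℝ ℝ (ℝ × ℝ × ℝ)).comp (ContinuousLinearMap.snd ℝ ℝ (ℝ × ℝ × ℝ × ℝ)))

/-- `vT` as a continuous linear map. -/
def vTL : P5 →L[ℝ] ℝ :=
  (ContinuousLinearMap.fst ℝ ℝ (ℝ × ℝ)).comp
    ((ContinuousLinearMap.snd ℝ ℝ (ℝ × ℝ × ℝ)).comp (ContinuousLinearMap.snd ℝ ℝ (ℝ × ℝ × ℝ × ℝ)))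

/-- `vR` as a continuous linear map. -/
def vRL : P5 →L[ℝ] ℝ :=
  (ContinuousLinearMap.fst ℝ ℝ ℝ).comp ((ContinuousLinearMap.snd ℝ ℝ (ℝ × ℝ)).comp
    ((ContinuousLinearMap.snd ℝ ℝ (ℝ × ℝ × ℝ)).comp (ContinuousLinearMap.snd ℝ ℝ (ℝ × ℝ × ℝ × ℝ))))

/-- `vW` as a continuous linear map. -/
def vWL : P5 →L[ℝ] ℝ :=
  (ContinuousLinearMap.snd ℝ ℝ ℝ).comp ((ContinuousLinearMap.snd ℝ ℝ (ℝ × ℝ)).comp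
    ((ContinuousLinearMap.snd ℝ ℝ (ℝ × ℝ × ℝ)).comp (ContinuousLinearMap.snd ℝ ℝ (ℝ × ℝ × ℝ × ℝ))))

@[simp] lemma bpL_apply (v : P5) : bpL v = (v.1, v.2.1) := rfl
@[simp] lemma vTL_apply (v : P5) : vTL v = v.2.2.1 := rfl
@[simp] lemma vRL_apply (v : P5) : vRL v = v.2.2.2.1 := rfl
@[simp] lemma vWL_apply (v : P5) : vWL v = v.2.2.2.2 := rfl

/-- derivative of `k m ∘ bp` at `p`. -/
def KD (k : ℕ → P2 → ℝ) (p : P5) (m : ℕ) : P5 →L[ℝ] ℝ := (fderiv ℝ (k m) (bp p)).comp bpL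

/-- derivative of `q ↦ fderiv ℝ f q v` at `p`. -/
def DF (f : P5 → ℝ) (p : P5) (v : P5) : P5 →L[ℝ] ℝ :=
  (ContinuousLinearMap.apply ℝ ℝ v).comp (fderiv ℝ (fderiv ℝ f) p)

@[simp] lemma KD_apply (k : ℕ → P2 → ℝ) (p : P5) (m : ℕ) (v : P5) :
    KD k p m v = fderiv ℝ (k m) (bp p) (v.1, v.2.1) := rfl
@[simp] lemma DF_apply (f : P5 → ℝ) (p : P5) (v w : P5) :
    DF f p v w = fderiv ℝ (fderiv ℝ f) p w v := rfl

end Stmt5Aux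

set_option maxHeartbeats 1000000 in
/-- The commutator of `δ_t` and `δ_r` is the vertical vector field
`(a₁ṫ+a₂ṙ)∂_ṫ + (a₃ṫ+a₄ṙ)∂_ṙ + a₅w∂_w`. -/
theorem stmt5 (Ω : Set P2) (hΩopen : IsOpen Ω) (hΩne : Ω.Nonempty)
    (k : ℕ → P2 → ℝ) (hk : ∀ i, ContDiffOn ℝ (⊤ : ℕ∞) (k i) Ω)
    (f : P5 → ℝ) (hf : ContDiffOn ℝ (⊤ : ℕ∞) f (D5 Ω)) :
    ∀ p ∈ D5 Ω,
      delT k (delR k f) p - delR k (delT k f) p =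
        (a1 k (bp p) * vT p + a2 k (bp p) * vR p) * pTd f p
          + (a3 k (bp p) * vT p + a4 k (bp p) * vR p) * pRd f p
          + a5 k (bp p) * vW p * pW f p := by
  intro p hp
  have hbpc : Continuous bp := by unfold bp; fun_prop
  have hvWc : Continuous vW := by unfold vW; fun_prop
  have hD5 : IsOpen (D5 Ω) := by
    have : D5 Ω = bp ⁻¹' Ω ∩ vW ⁻¹' (Set.Ioi 0) := rfl
    rw [this]
    exact (hΩopen.preimage hbpc).inter (isOpen_Ioi.preimage hvWc)
  have hfp : ContDiffAt ℝ (⊤ : ℕ∞) f p := hf.contDiffAt (hD5.mem_nhds hp)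
  have hq : bp p ∈ Ω := hp.1
  have hkd : ∀ m, DifferentiableAt ℝ (k m) (bp p) :=
    fun m => ((hk m).contDiffAt (hΩopen.mem_nhds hq)).differentiableAt (by simp)
  have hsymm : ∀ v w, fderiv ℝ (fderiv ℝ f) p v w = fderiv ℝ (fderiv ℝ f) p w v :=
    (hfp.isSymmSndFDerivAt (by rw [minSmoothness_of_isRCLikeNormedField]; exact WithTop.coe_le_coe.mpr le_top)).eq
  have hDf : ∀ v : P5, HasFDerivAt (fun q => fderiv ℝ f q v) (Stmt5Aux.DF f p v) p := by
    intro v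
    have h1 : ContDiffAt ℝ 1 (fderiv ℝ f) p := hfp.fderiv_right (WithTop.coe_le_coe.mpr le_top)
    have h2 : HasFDerivAt (fderiv ℝ f) (fderiv ℝ (fderiv ℝ f) p) p :=
      (h1.differentiableAt one_ne_zero).hasFDerivAt
    exact (ContinuousLinearMap.apply ℝ ℝ v).hasFDerivAt.comp p h2
  have hbp : HasFDerivAt bp Stmt5Aux.bpL p := Stmt5Aux.bpL.hasFDerivAt
  have hKm : ∀ m, HasFDerivAt (fun q => k m (bp q)) (Stmt5Aux.KD k p m) p :=
    fun m => ((hkd m).hasFDerivAt).comp p hbp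
  have hvT : HasFDerivAt vT Stmt5Aux.vTL p := Stmt5Aux.vTL.hasFDerivAt
  have hvR : HasFDerivAt vR Stmt5Aux.vRL p := Stmt5Aux.vRL.hasFDerivAt
  have hvW : HasFDerivAt vW Stmt5Aux.vWL p := Stmt5Aux.vWL.hasFDerivAt
  have hRd : HasFDerivAt (delR k f)
      (Stmt5Aux.DF f p (0,1,0,0,0)
        - ((k 2 (bp p) * vT p + k 3 (bp p) * vR p) • Stmt5Aux.DF f p (0,0,1,0,0)
          + fderiv ℝ f p (0,0,1,0,0) •
            (k 2 (bp p) • Stmt5Aux.vTL + vT p • Stmt5Aux.KD k p 2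
              + (k 3 (bp p) • Stmt5Aux.vRL + vR p • Stmt5Aux.KD k p 3)))
        - ((k 6 (bp p) * vT p + k 5 (bp p) * vR p) • Stmt5Aux.DF f p (0,0,0,1,0)
          + fderiv ℝ f p (0,0,0,1,0) •
            (k 6 (bp p) • Stmt5Aux.vTL + vT p • Stmt5Aux.KD k p 6
              + (k 5 (bp p) • Stmt5Aux.vRL + vR p • Stmt5Aux.KD k p 5)))
        - ((k 9 (bp p) * vW p) • Stmt5Aux.DF f p (0,0,0,0,1)
          + fderiv ℝ f p (0,0,0,0,1) •
            (k 9 (bp p) • Stmt5Aux.vWL + vW p • Stmt5Aux.KD k p 9))) p := by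
    exact (((hDf (0,1,0,0,0)).sub
        ((((hKm 2).mul hvT).add ((hKm 3).mul hvR)).mul (hDf (0,0,1,0,0)))).sub
        ((((hKm 6).mul hvT).add ((hKm 5).mul hvR)).mul (hDf (0,0,0,1,0)))).sub
        (((hKm 9).mul hvW).mul (hDf (0,0,0,0,1)))
  have hTd : HasFDerivAt (delT k f)
      (Stmt5Aux.DF f p (1,0,0,0,0)
        - ((k 1 (bp p) * vT p + k 2 (bp p) * vR p) • Stmt5Aux.DF f p (0,0,1,0,0)
          + fderiv ℝ f p (0,0,1,0,0) •
            (k 1 (bp p) • Stmt5Aux.vTL + vT p • Stmt5Aux.KD k p 1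
              + (k 2 (bp p) • Stmt5Aux.vRL + vR p • Stmt5Aux.KD k p 2)))
        - ((k 4 (bp p) * vT p + k 6 (bp p) * vR p) • Stmt5Aux.DF f p (0,0,0,1,0)
          + fderiv ℝ f p (0,0,0,1,0) •
            (k 4 (bp p) • Stmt5Aux.vTL + vT p • Stmt5Aux.KD k p 4
              + (k 6 (bp p) • Stmt5Aux.vRL + vR p • Stmt5Aux.KD k p 6)))
        - ((k 8 (bp p) * vW p) • Stmt5Aux.DF f p (0,0,0,0,1)
          + fderiv ℝ f p (0,0,0,0,1) •
            (k 8 (bp p) • Stmt5Aux.vWL + vW p • Stmt5Aux.KD k p 8))) p := by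
    exact (((hDf (1,0,0,0,0)).sub
        ((((hKm 1).mul hvT).add ((hKm 2).mul hvR)).mul (hDf (0,0,1,0,0)))).sub
        ((((hKm 4).mul hvT).add ((hKm 6).mul hvR)).mul (hDf (0,0,0,1,0)))).sub
        (((hKm 8).mul hvW).mul (hDf (0,0,0,0,1)))
  rw [show delT k (delR k f) p - delR k (delT k f) p
      = (fderiv ℝ (delR k f) p (1,0,0,0,0)
          - (k 1 (bp p) * vT p + k 2 (bp p) * vR p) * fderiv ℝ (delR k f) p (0,0,1,0,0)
          - (k 4 (bp p) * vT p + k 6 (bp p) * vR p) * fderiv ℝ (delR k f) p (0,0,0,1,0)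
          - k 8 (bp p) * vW p * fderiv ℝ (delR k f) p (0,0,0,0,1))
        - (fderiv ℝ (delT k f) p (0,1,0,0,0)
          - (k 2 (bp p) * vT p + k 3 (bp p) * vR p) * fderiv ℝ (delT k f) p (0,0,1,0,0)
          - (k 6 (bp p) * vT p + k 5 (bp p) * vR p) * fderiv ℝ (delT k f) p (0,0,0,1,0)
          - k 9 (bp p) * vW p * fderiv ℝ (delT k f) p (0,0,0,0,1)) from rfl]
  rw [hRd.fderiv, hTd.fderiv]
  simp only [ContinuousLinearMap.coe_sub', Pi.sub_apply, ContinuousLinearMap.add_apply,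
    ContinuousLinearMap.coe_smul', Pi.smul_apply, Stmt5Aux.DF_apply, Stmt5Aux.KD_apply,
    Stmt5Aux.vTL_apply, Stmt5Aux.vRL_apply, Stmt5Aux.vWL_apply, smul_eq_mul]
  have hz : ∀ m : ℕ, fderiv ℝ (k m) (bp p) ((0:ℝ), (0:ℝ)) = 0 := fun m => by
    exact (fderiv ℝ (k m) (bp p)).map_zero
  rw [hsymm (0,1,0,0,0) (1,0,0,0,0), hsymm (0,0,1,0,0) (1,0,0,0,0),
    hsymm (0,0,0,1,0) (1,0,0,0,0), hsymm (0,0,0,0,1) (1,0,0,0,0),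
    hsymm (0,0,1,0,0) (0,1,0,0,0), hsymm (0,0,0,1,0) (0,1,0,0,0),
    hsymm (0,0,0,0,1) (0,1,0,0,0), hsymm (0,0,0,1,0) (0,0,1,0,0),
    hsymm (0,0,0,0,1) (0,0,1,0,0), hsymm (0,0,0,0,1) (0,0,0,1,0)]
  simp only [a1, a2, a3, a4, a5, dt2, dr2, pTd, pRd, pW, vT, vR, vW, bp]
  simp [fun m => show fderiv ℝ (k m) (p.1, p.2.1) ((0:ℝ), (0:ℝ)) = 0 from hz m]
  ring
end
end

section
/- For every smooth function f on Ω × ℝ² × (0,∞), the commutators of δ_w with δ_t and δ_r are given at every point by δ_w(δ_t f) − δ_t(δ_w f) = a₆w∂_ṫ f + a₇w∂_ṙ f + (a₈ṫ + a₉ṙ)∂_w f and δ_w(δ_r f) − δ_r(δ_w f) = a₁₀w∂_ṫ f + a₁₁w∂_ṙ f + (a₁₂ṫ + a₁₃ṙ)∂_w f. -/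
noncomputable section
open Real Set

/-- `bp` as a continuous linear map. -/
def bpL : P5 →L[ℝ] P2 :=
  (ContinuousLinearMap.fst ℝ ℝ (ℝ × ℝ × ℝ × ℝ)).prod
    ((ContinuousLinearMap.fst ℝ ℝ (ℝ × ℝ × ℝ)).comp
      (ContinuousLinearMap.snd ℝ ℝ (ℝ × ℝ × ℝ × ℝ)))

/-- `vT` as a continuous linear map. -/
def vtL : P5 →L[ℝ] ℝ :=
  (ContinuousLinearMap.fst ℝ ℝ (ℝ × ℝ)).comp
    ((ContinuousLinearMap.snd ℝ ℝ (ℝ × ℝ × ℝ)).comp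
      (ContinuousLinearMap.snd ℝ ℝ (ℝ × ℝ × ℝ × ℝ)))

/-- `vR` as a continuous linear map. -/
def vrL : P5 →L[ℝ] ℝ :=
  (ContinuousLinearMap.fst ℝ ℝ ℝ).comp
    ((ContinuousLinearMap.snd ℝ ℝ (ℝ × ℝ)).comp
      ((ContinuousLinearMap.snd ℝ ℝ (ℝ × ℝ × ℝ)).comp
        (ContinuousLinearMap.snd ℝ ℝ (ℝ × ℝ × ℝ × ℝ))))

/-- `vW` as a continuous linear map. -/
def vwL : P5 →L[ℝ] ℝ :=
  (ContinuousLinearMap.snd ℝ ℝ ℝ).comp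
    ((ContinuousLinearMap.snd ℝ ℝ (ℝ × ℝ)).comp
      ((ContinuousLinearMap.snd ℝ ℝ (ℝ × ℝ × ℝ)).comp
        (ContinuousLinearMap.snd ℝ ℝ (ℝ × ℝ × ℝ × ℝ))))

lemma fderiv2_zero (g : P2 → ℝ) (q : P2) : fderiv ℝ g q (0, 0) = 0 :=
  (fderiv ℝ g q).map_zero

@[simp] lemma bpL_apply (v : P5) : bpL v = (v.1, v.2.1) := rfl
@[simp] lemma vtL_apply (v : P5) : vtL v = v.2.2.1 := rfl
@[simp] lemma vrL_apply (v : P5) : vrL v = v.2.2.2.1 := rfl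
@[simp] lemma vwL_apply (v : P5) : vwL v = v.2.2.2.2 := rfl
set_option maxHeartbeats 1000000 in
/-- The commutators of `δ_w` with `δ_t` and `δ_r` are given by the curvature
coefficients `a₆,…,a₁₃`. -/

theorem stmt6 (Ω : Set P2) (hΩopen : IsOpen Ω) (hΩne : Ω.Nonempty)
    (k : ℕ → P2 → ℝ) (hk : ∀ i, ContDiffOn ℝ (⊤ : ℕ∞) (k i) Ω)
    (f : P5 → ℝ) (hf : ContDiffOn ℝ (⊤ : ℕ∞) f (D5 Ω)) :
    ∀ p ∈ D5 Ω,
      delW k (delT k f) p - delT k (delW k f) p =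
        a6 k (bp p) * vW p * pTd f p + a7 k (bp p) * vW p * pRd f p
          + (a8 k (bp p) * vT p + a9 k (bp p) * vR p) * pW f p ∧
      delW k (delR k f) p - delR k (delW k f) p =
        a10 k (bp p) * vW p * pTd f p + a11 k (bp p) * vW p * pRd f p
          + (a12 k (bp p) * vT p + a13 k (bp p) * vR p) * pW f p := by
  intro p hp
  have hU : IsOpen (D5 Ω) := by
    have h : D5 Ω = bp ⁻¹' Ω ∩ vW ⁻¹' (Set.Ioi 0) := rfl
    rw [h]
    exact (hΩopen.preimage bpL.continuous).inter (isOpen_Ioi.preimage vwL.continuous)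
  have hq : bp p ∈ Ω := hp.1
  have hfp : ContDiffAt ℝ (⊤ : ℕ∞) f p := hf.contDiffAt (hU.mem_nhds hp)
  have hdf : DifferentiableAt ℝ (fderiv ℝ f) p :=
    (hfp.fderiv_right (m := 1) (by exact WithTop.coe_le_coe.mpr (le_top : ((1:ℕ∞)+1) ≤ ⊤))).differentiableAt one_ne_zero
  have hsym : IsSymmSndFDerivAt ℝ f p := hfp.isSymmSndFDerivAt (by simp only [minSmoothness_of_isRCLikeNormedField]; exact WithTop.coe_le_coe.mpr (le_top : ((2:ℕ∞)) ≤ ⊤))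
  have hgH : ∀ e : P5, HasFDerivAt (fun q => fderiv ℝ f q e)
      ((fderiv ℝ (fderiv ℝ f) p).flip e) p := by
    intro e
    have h := hdf.hasFDerivAt.clm_apply (hasFDerivAt_const e p)
    simpa using h
  have hkq : ∀ i, DifferentiableAt ℝ (k i) (bp p) := fun i =>
    ((hk i).contDiffAt (hΩopen.mem_nhds hq)).differentiableAt (by simp)
  have hKH : ∀ i, HasFDerivAt (fun q : P5 => k i (bp q))
      ((fderiv ℝ (k i) (bp p)).comp bpL) p := fun i =>
    (hkq i).hasFDerivAt.comp p bpL.hasFDerivAt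
  have HT := ((((hgH (1,0,0,0,0)).sub
      ((((hKH 1).mul vtL.hasFDerivAt).add ((hKH 2).mul vrL.hasFDerivAt)).mul
        (hgH (0,0,1,0,0)))).sub
      ((((hKH 4).mul vtL.hasFDerivAt).add ((hKH 6).mul vrL.hasFDerivAt)).mul
        (hgH (0,0,0,1,0)))).sub
      ((((hKH 8).mul vwL.hasFDerivAt)).mul (hgH (0,0,0,0,1))))
  have hDT : fderiv ℝ (delT k f) p = _ := HT.fderiv
  have HR := ((((hgH (0,1,0,0,0)).sub
      ((((hKH 2).mul vtL.hasFDerivAt).add ((hKH 3).mul vrL.hasFDerivAt)).mul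
        (hgH (0,0,1,0,0)))).sub
      ((((hKH 6).mul vtL.hasFDerivAt).add ((hKH 5).mul vrL.hasFDerivAt)).mul
        (hgH (0,0,0,1,0)))).sub
      ((((hKH 9).mul vwL.hasFDerivAt)).mul (hgH (0,0,0,0,1))))
  have HW := ((((vwL.hasFDerivAt.mul (hKH 7)).mul (hgH (0,0,1,0,0))).add
      ((vwL.hasFDerivAt.mul (hKH 10)).mul (hgH (0,0,0,1,0)))).add
      ((((hKH 8).mul vtL.hasFDerivAt).add ((hKH 9).mul vrL.hasFDerivAt)).mul
        (hgH (0,0,0,0,1))))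
  have hDT : fderiv ℝ (delT k f) p = _ := HT.fderiv
  have hDR : fderiv ℝ (delR k f) p = _ := HR.fderiv
  have hDW : fderiv ℝ (delW k f) p = _ := HW.fderiv
  clear HT HR HW
  constructor
  · simp only [delW, delT, pT, pTd, pRd, pW]
    rw [hDT, hDW]
    simp only [ContinuousLinearMap.sub_apply, ContinuousLinearMap.add_apply,
      ContinuousLinearMap.coe_smul', Pi.smul_apply, smul_eq_mul, Pi.mul_apply, Pi.add_apply,
      ContinuousLinearMap.flip_apply, ContinuousLinearMap.coe_comp',
      Function.comp_apply, bpL_apply, vtL_apply, vrL_apply, vwL_apply, vT, vR, vW, fderiv2_zero]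
    simp only [hsym (0,0,1,0,0) (1,0,0,0,0), hsym (0,0,0,1,0) (1,0,0,0,0),
      hsym (0,0,0,0,1) (1,0,0,0,0), hsym (0,0,0,1,0) (0,0,1,0,0),
      hsym (0,0,0,0,1) (0,0,1,0,0), hsym (0,0,0,0,1) (0,0,0,1,0)]
    simp only [a6, a7, a8, a9, dt2]
    ring
  · simp only [delW, delR, pR, pTd, pRd, pW]
    rw [hDR, hDW]
    simp only [ContinuousLinearMap.sub_apply, ContinuousLinearMap.add_apply,
      ContinuousLinearMap.coe_smul', Pi.smul_apply, smul_eq_mul, Pi.mul_apply, Pi.add_apply,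
      ContinuousLinearMap.flip_apply, ContinuousLinearMap.coe_comp',
      Function.comp_apply, bpL_apply, vtL_apply, vrL_apply, vwL_apply, vT, vR, vW, fderiv2_zero]
    simp only [hsym (0,0,1,0,0) (0,1,0,0,0), hsym (0,0,0,1,0) (0,1,0,0,0),
      hsym (0,0,0,0,1) (0,1,0,0,0), hsym (0,0,0,1,0) (0,0,1,0,0),
      hsym (0,0,0,0,1) (0,0,1,0,0), hsym (0,0,0,0,1) (0,0,0,1,0)]
    simp only [a10, a11, a12, a13, dr2]
    ring
end
end
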